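/- arXiv:2602.07229 — 7 statements merged into one kernel-verified Lean document; each statement's English description precedes it below -/
import Mathlib

section
/- Let H be a finite simple graph with maximum degree at most 3, and let u, v be adjacent vertices both of degree 2 in H. Then H is 3-edge-colorable if and only if H − u − v is 3-edge-colorable. -/
def SimpleGraph.EdgeColorable {V : Type*} (H : SimpleGraph V) (k : ℕ) : Prop :=
  H.lineGraph.Colorable k

/-!
Let `a` and `b` be the other neighbours of `u` and `v`. Starting from a 3-colouring of the line
graph restricted to the edges that avoid `u` and `v`, add the edges `ua`, `vb`, `uv` one at a time.
When `ua` is added its only coloured neighbours are the at most two other edges at `a`; when `vb`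
is added, the at most two other edges at `b`; and `uv` meets only `ua` and `vb`. So each new edge
sees at most two colours and the colouring extends greedily.
-/

namespace SimpleGraph

section Greedy

variable {W : Type*} {G : SimpleGraph W} {k : ℕ}

theorem Colorable.induce_insert {s : Set W} {x : W} (hs : (G.induce s).Colorable k)
    (hx : (G.neighborSet x ∩ s).encard < k) : (G.induce (insert x s)).Colorable k := by
  classical
  obtain ⟨C⟩ := hs
  obtain ⟨c, hc⟩ :
      ∃ c, c ∉ Set.range fun y : ↥(G.neighborSet x ∩ s) => C ⟨y, y.2.2⟩ := by
    by_contra! h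
    refine hx.not_ge ?_
    calc (k : ℕ∞) = (Set.univ : Set (Fin k)).encard := by simp
      _ = (Set.range fun y : ↥(G.neighborSet x ∩ s) => C ⟨y, y.2.2⟩).encard := by
        rw [Set.eq_univ_of_forall h]
      _ ≤ (G.neighborSet x ∩ s).encard := by
        rw [← Set.image_univ]
        exact (Set.encard_image_le _ _).trans_eq (by simp)
  refine ⟨Coloring.mk (fun y => if hy : y.1 ∈ s then C ⟨y, hy⟩ else c) ?_⟩
  rintro ⟨y, hy⟩ ⟨z, hz⟩ hyz
  simp only [comap_adj, Function.Embedding.subtype_apply] at hyz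
  by_cases hys : y ∈ s <;> by_cases hzs : z ∈ s <;>
    simp only [hys, hzs, dif_pos, dif_neg, not_false_eq_true]
  · exact C.valid hyz
  · obtain rfl : z = x := (Set.mem_insert_iff.mp hz).resolve_right hzs
    exact fun h => hc ⟨⟨y, hyz.symm, hys⟩, h⟩
  · obtain rfl : y = x := (Set.mem_insert_iff.mp hy).resolve_right hys
    exact fun h => hc ⟨⟨z, hyz, hzs⟩, h.symm⟩
  · obtain rfl : y = x := (Set.mem_insert_iff.mp hy).resolve_right hys
    obtain rfl : z = y := (Set.mem_insert_iff.mp hz).resolve_right hzs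
    exact absurd hyz (G.loopless.irrefl _)

theorem Colorable.of_induce_of_forall_mem {s : Set W} (h : (G.induce s).Colorable k)
    (hs : ∀ x, x ∈ s) : G.Colorable k := by
  rw [Set.eq_univ_of_forall hs] at h
  exact (colorable_congr (induceUnivIso G)).mp h

end Greedy

section LineGraph

variable {V : Type*} {H : SimpleGraph V}

theorem EdgeColorable.induce {k : ℕ} (h : H.EdgeColorable k) (S : Set V) :
    (H.induce S).EdgeColorable k :=
  Colorable.of_hom (Embedding.induce S).toCopy.toLineGraphEmbedding.toHom h

theorem EdgeColorable.lineGraph_induce {k : ℕ} {S : Set V} (h : (H.induce S).EdgeColorable k) :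
    (H.lineGraph.induce {e : H.edgeSet | ∀ w ∈ (e : Sym2 V), w ∈ S}).Colorable k := by
  let f := (Embedding.induce S : H.induce S ↪g H).toCopy.toLineGraphEmbedding
  have hrange : {e : H.edgeSet | ∀ w ∈ (e : Sym2 V), w ∈ S} ⊆ Set.range f := by
    intro e he
    have he' : (e : Sym2 V).attachWith he ∈ (H.induce S).edgeSet :=
      (Embedding.induce S).map_mem_edgeSet_iff.mp <| by
        convert e.2
        exact Sym2.attachWith_map_subtypeVal he
    exact ⟨⟨_, he'⟩, Subtype.ext (Sym2.attachWith_map_subtypeVal he)⟩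
  exact ((colorable_congr f.isoInduceRange).mp h).of_hom (induceHomOfLE H.lineGraph hrange).toHom

theorem encard_setOf_mem_edge_eq_degree [DecidableEq V] (p : V) [Fintype (H.neighborSet p)] :
    {e : H.edgeSet | p ∈ (e : Sym2 V)}.encard = H.degree p := by
  rw [← Subtype.val_injective.encard_image, ← card_incidenceFinset_eq_degree,
    ← Set.encard_coe_eq_coe_finsetCard, coe_incidenceFinset]
  congr
  ext e
  simp [incidenceSet, and_comm]

theorem encard_setOf_mem_edge_diff_singleton [DecidableEq V] {p : V} [Fintype (H.neighborSet p)]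
    {e : H.edgeSet} (hp : p ∈ (e : Sym2 V)) :
    ({e' : H.edgeSet | p ∈ (e' : Sym2 V)} \ {e}).encard = (H.degree p - 1 : ℕ) := by
  rw [Set.encard_sdiff_singleton_of_mem (show e ∈ {e' : H.edgeSet | p ∈ (e' : Sym2 V)} from hp),
    encard_setOf_mem_edge_eq_degree]
  norm_cast

theorem lineGraph_neighborSet_subset {e : H.edgeSet} {p q : V} (he : (e : Sym2 V) = s(p, q)) :
    H.lineGraph.neighborSet e ⊆
      ({e' | p ∈ (e' : Sym2 V)} \ {e}) ∪ ({e' | q ∈ (e' : Sym2 V)} \ {e}) := by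
  intro e' h
  obtain ⟨hne, w, hw, hw'⟩ := lineGraph_adj_iff_exists.mp h
  rw [he, Sym2.mem_iff] at hw
  rcases hw with rfl | rfl
  · exact .inl ⟨hw', hne.symm⟩
  · exact .inr ⟨hw', hne.symm⟩

variable [DecidableEq V] {e : H.edgeSet} {p q : V}

theorem encard_lineGraph_neighborSet_le [Fintype (H.neighborSet p)] [Fintype (H.neighborSet q)]
    (he : (e : Sym2 V) = s(p, q)) :
    (H.lineGraph.neighborSet e).encard ≤ (H.degree p - 1 : ℕ) + (H.degree q - 1 : ℕ) := by
  rw [← encard_setOf_mem_edge_diff_singleton (he ▸ Sym2.mem_mk_left p q),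
    ← encard_setOf_mem_edge_diff_singleton (he ▸ Sym2.mem_mk_right p q)]
  exact (Set.encard_le_encard (lineGraph_neighborSet_subset he)).trans (Set.encard_union_le _ _)

theorem encard_lineGraph_neighborSet_inter_le [Fintype (H.neighborSet q)]
    (he : (e : Sym2 V) = s(p, q)) {s : Set H.edgeSet}
    (hs : ∀ e' ∈ s, p ∉ (e' : Sym2 V)) :
    (H.lineGraph.neighborSet e ∩ s).encard ≤ (H.degree q - 1 : ℕ) := by
  rw [← encard_setOf_mem_edge_diff_singleton (he ▸ Sym2.mem_mk_right p q)]
  refine Set.encard_le_encard fun e' ⟨hadj, he's⟩ => ?_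
  exact (lineGraph_neighborSet_subset he hadj).resolve_left fun h => hs e' he's h.1

end LineGraph

section DegreeTwo

variable {V : Type*} [DecidableEq V] {H : SimpleGraph V} {u v a b : V}

theorem exists_neighborFinset_eq_pair [Fintype (H.neighborSet u)] (huv : H.Adj u v)
    (hu : H.degree u = 2) : ∃ a, a ≠ v ∧ H.neighborFinset u = {v, a} := by
  have hv : v ∈ H.neighborFinset u := (mem_neighborFinset _ _ _).mpr huv
  obtain ⟨a, ha⟩ : ∃ a, (H.neighborFinset u).erase v = {a} := Finset.card_eq_one.mp <| by
    rw [Finset.card_erase_of_mem hv, card_neighborFinset_eq_degree, hu]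
  refine ⟨a, (Finset.mem_erase.mp (ha ▸ Finset.mem_singleton_self a)).1, ?_⟩
  rw [← Finset.insert_erase hv, ha]

theorem eq_or_eq_of_neighborFinset_eq_pair [Fintype (H.neighborSet u)]
    (hN : H.neighborFinset u = {v, a}) {e : Sym2 V} (he : e ∈ H.edgeSet) (hue : u ∈ e) :
    e = s(u, v) ∨ e = s(u, a) := by
  obtain ⟨w, rfl⟩ := Sym2.mem_iff_exists.mp hue
  have hw : w ∈ H.neighborFinset u := (mem_neighborFinset _ _ _).mpr he
  rw [hN, Finset.mem_insert, Finset.mem_singleton] at hw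
  rcases hw with rfl | rfl <;> simp

theorem edge_cases_of_neighborFinset_eq_pair [Fintype (H.neighborSet u)]
    [Fintype (H.neighborSet v)] (hNu : H.neighborFinset u = {v, a})
    (hNv : H.neighborFinset v = {u, b}) {e : Sym2 V} (he : e ∈ H.edgeSet) :
    e = s(u, v) ∨ e = s(v, b) ∨ e = s(u, a) ∨ (u ∉ e ∧ v ∉ e) := by
  by_cases hue : u ∈ e
  · rcases eq_or_eq_of_neighborFinset_eq_pair hNu he hue with rfl | rfl <;> simp
  by_cases hve : v ∈ e
  · rcases eq_or_eq_of_neighborFinset_eq_pair hNv he hve with rfl | rfl <;> simp [Sym2.eq_swap]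
  exact .inr (.inr (.inr ⟨hue, hve⟩))

end DegreeTwo

end SimpleGraph

open SimpleGraph

/-- Reduction 2: deleting two adjacent vertices of degree 2 does not change
3-edge-colorability. -/
theorem stmt6 {V : Type*} [Fintype V] [DecidableEq V] (H : SimpleGraph V)
    [DecidableRel H.Adj] (hmax : ∀ w, H.degree w ≤ 3) (u v : V) (huv : H.Adj u v)
    (hu : H.degree u = 2) (hv : H.degree v = 2) :
    H.EdgeColorable 3 ↔ (H.induce {w | w ≠ u ∧ w ≠ v}).EdgeColorable 3 := by
  refine ⟨fun h => h.induce _, fun h => ?_⟩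
  obtain ⟨a, hav, hNu⟩ := exists_neighborFinset_eq_pair huv hu
  obtain ⟨b, -, hNv⟩ := exists_neighborFinset_eq_pair huv.symm hv
  have hua : H.Adj u a := by simp [← mem_neighborFinset, hNu]
  have hvb : H.Adj v b := by simp [← mem_neighborFinset, hNv]
  have hlt : ∀ w, ((H.degree w - 1 : ℕ) : ℕ∞) < 3 := fun w => by
    have := hmax w
    exact_mod_cast (by omega : H.degree w - 1 < 3)
  have h₁ := h.lineGraph_induce.induce_insert (x := ⟨s(u, a), hua⟩) <|
    (encard_lineGraph_neighborSet_inter_le rfl fun e he hue => (he u hue).1 rfl).trans_lt (hlt a)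
  have h₂ := h₁.induce_insert (x := ⟨s(v, b), hvb⟩) <| by
    refine (encard_lineGraph_neighborSet_inter_le rfl ?_).trans_lt (hlt b)
    rintro e (rfl | he) hve
    · simp [hav.symm, huv.ne.symm] at hve
    · exact (he v hve).2 rfl
  have h₃ := h₂.induce_insert (x := ⟨s(u, v), huv⟩) <| by
    refine (Set.encard_le_encard Set.inter_subset_left).trans_lt
      ((encard_lineGraph_neighborSet_le rfl).trans_lt ?_)
    rw [hu, hv]
    norm_num
  refine h₃.of_induce_of_forall_mem fun e => ?_
  rcases edge_cases_of_neighborFinset_eq_pair hNu hNv e.2 with he | he | he | ⟨hue, hve⟩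
  · exact .inl (Subtype.ext he)
  · exact .inr (.inl (Subtype.ext he))
  · exact .inr (.inr (.inl (Subtype.ext he)))
  · refine .inr (.inr (.inr fun w hw => ⟨?_, ?_⟩)) <;> rintro rfl <;> contradiction
end

section
/- Let H be a finite simple triangle-free graph with maximum degree at most 3 containing an induced 4-cycle w1w2w3w4 with deg(w1) = deg(w3) = 2. Then H is 3-edge-colorable if and only if H − {w1, w2, w3, w4} is 3-edge-colorable. -/
open SimpleGraph in
private lemma bridge7 {V : Type*} (H : SimpleGraph V) :
    H.EdgeColorable 3 ↔ ∃ f : V → V → Fin 3, (∀ u v, f u v = f v u) ∧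
      ∀ ⦃u v w⦄, H.Adj u v → H.Adj u w → v ≠ w → f u v ≠ f u w := by
  constructor
  · rintro ⟨c⟩
    classical
    refine ⟨fun u v => if h : H.Adj u v then c ⟨s(u,v), h⟩ else 0, ?_, ?_⟩
    · intro u v
      dsimp only
      by_cases h : H.Adj u v
      · rw [dif_pos h, dif_pos h.symm]
        congr 1
        exact Subtype.ext (Sym2.eq_swap)
      · rw [dif_neg h, dif_neg (fun h' => h h'.symm)]
    · intro u v w huv huw hvw
      dsimp only
      rw [dif_pos huv, dif_pos huw]
      apply c.valid
      constructor
      · intro h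
        apply hvw
        have := Subtype.mk_eq_mk.mp h
        rw [Sym2.eq_iff] at this
        rcases this with ⟨_, h⟩ | ⟨h1, h2⟩
        · exact h
        · rw [← h1, h2]
      · exact ⟨u, by simp, by simp⟩
  · rintro ⟨f, hsym, hf⟩
    have key : ∀ (a b p q : V), H.Adj a b → H.Adj p q → s(a,b) ≠ s(p,q) →
        ∀ v, v ∈ s(a,b) → v ∈ s(p,q) →
        Sym2.lift ⟨f,hsym⟩ s(a,b) ≠ Sym2.lift ⟨f,hsym⟩ s(p,q) := by
      intro a b p q hab hpq hne' v hv1 hv2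
      simp only [Sym2.mem_iff] at hv1 hv2
      simp only [Sym2.lift_mk]
      rcases hv1 with rfl | rfl
      · rcases hv2 with rfl | rfl
        · exact hf hab hpq (by rintro rfl; exact hne' rfl)
        · rw [hsym p v]
          exact hf hab hpq.symm (by rintro rfl; exact hne' Sym2.eq_swap)
      · rcases hv2 with rfl | rfl
        · rw [hsym a v]
          exact hf hab.symm hpq (by rintro rfl; exact hne' Sym2.eq_swap)
        · rw [hsym a v, hsym p v]
          exact hf hab.symm hpq.symm (by rintro rfl; exact hne' rfl)
    refine ⟨Coloring.mk (fun e => Sym2.lift ⟨f, hsym⟩ e.val) ?_⟩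
    rintro ⟨e₁, he₁⟩ ⟨e₂, he₂⟩ ⟨hne, v, hv1, hv2⟩
    have hne' : e₁ ≠ e₂ := fun h => hne (Subtype.ext h)
    obtain ⟨⟨a, b⟩, rfl⟩ := e₁.exists_rep
    obtain ⟨⟨p, q⟩, rfl⟩ := e₂.exists_rep
    exact key a b p q he₁ he₂ hne' v hv1 hv2


section FSec
variable {V : Type*} [DecidableEq V] (s : Set V) [DecidablePred (· ∈ s)]
  (w1 w2 w3 w4 : V) (a b a' b' c2 c4 : Fin 3) (f : ↥s → ↥s → Fin 3)

private def Fdef (u v : V) : Fin 3 :=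
  if (u = w1 ∧ v = w2) ∨ (u = w2 ∧ v = w1) then a
  else if (u = w2 ∧ v = w3) ∨ (u = w3 ∧ v = w2) then b
  else if (u = w3 ∧ v = w4) ∨ (u = w4 ∧ v = w3) then a'
  else if (u = w4 ∧ v = w1) ∨ (u = w1 ∧ v = w4) then b'
  else if u = w2 ∨ v = w2 then c2
  else if u = w4 ∨ v = w4 then c4
  else if h : u ∈ s ∧ v ∈ s then f ⟨u, h.1⟩ ⟨v, h.2⟩ else 0

variable {s w1 w2 w3 w4}

private lemma Fdef_symm (hsym : ∀ u v, f u v = f v u) (u v : V) :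
    Fdef s w1 w2 w3 w4 a b a' b' c2 c4 f u v = Fdef s w1 w2 w3 w4 a b a' b' c2 c4 f v u := by
  unfold Fdef
  have swap : ∀ {p q r t : Prop}, (p ∧ q) ∨ (r ∧ t) → (q ∧ p) ∨ (t ∧ r) :=
    fun h => h.elim (fun h => Or.inl ⟨h.2, h.1⟩) (fun h => Or.inr ⟨h.2, h.1⟩)
  by_cases h1 : (u = w1 ∧ v = w2) ∨ (u = w2 ∧ v = w1)
  · rw [if_pos h1, if_pos (show (v = w1 ∧ u = w2) ∨ (v = w2 ∧ u = w1) from Or.symm (swap h1))]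
  rw [if_neg h1, if_neg (show ¬((v = w1 ∧ u = w2) ∨ (v = w2 ∧ u = w1)) from
    fun h => h1 (Or.symm (swap h)))]
  by_cases h2 : (u = w2 ∧ v = w3) ∨ (u = w3 ∧ v = w2)
  · rw [if_pos h2, if_pos (show (v = w2 ∧ u = w3) ∨ (v = w3 ∧ u = w2) from Or.symm (swap h2))]
  rw [if_neg h2, if_neg (show ¬((v = w2 ∧ u = w3) ∨ (v = w3 ∧ u = w2)) from
    fun h => h2 (Or.symm (swap h)))]
  by_cases h3 : (u = w3 ∧ v = w4) ∨ (u = w4 ∧ v = w3)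
  · rw [if_pos h3, if_pos (show (v = w3 ∧ u = w4) ∨ (v = w4 ∧ u = w3) from Or.symm (swap h3))]
  rw [if_neg h3, if_neg (show ¬((v = w3 ∧ u = w4) ∨ (v = w4 ∧ u = w3)) from
    fun h => h3 (Or.symm (swap h)))]
  by_cases h4 : (u = w4 ∧ v = w1) ∨ (u = w1 ∧ v = w4)
  · rw [if_pos h4, if_pos (show (v = w4 ∧ u = w1) ∨ (v = w1 ∧ u = w4) from Or.symm (swap h4))]
  rw [if_neg h4, if_neg (show ¬((v = w4 ∧ u = w1) ∨ (v = w1 ∧ u = w4)) from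
    fun h => h4 (Or.symm (swap h)))]
  by_cases h5 : u = w2 ∨ v = w2
  · rw [if_pos h5, if_pos (show v = w2 ∨ u = w2 from h5.symm)]
  rw [if_neg h5, if_neg (show ¬(v = w2 ∨ u = w2) from fun h => h5 h.symm)]
  by_cases h6 : u = w4 ∨ v = w4
  · rw [if_pos h6, if_pos (show v = w4 ∨ u = w4 from h6.symm)]
  rw [if_neg h6, if_neg (show ¬(v = w4 ∨ u = w4) from fun h => h6 h.symm)]
  by_cases h7 : u ∈ s ∧ v ∈ s
  · rw [dif_pos h7, dif_pos (show v ∈ s ∧ u ∈ s from And.intro h7.2 h7.1)]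
    exact hsym _ _
  · rw [dif_neg h7, dif_neg (show ¬(v ∈ s ∧ u ∈ s) from fun h => h7 ⟨h.2, h.1⟩)]

variable (ne12 : w1 ≠ w2) (ne23 : w2 ≠ w3) (ne34 : w3 ≠ w4) (ne14 : w1 ≠ w4)
  (hne13 : w1 ≠ w3) (hne24 : w2 ≠ w4)

include ne12 ne23 ne34 ne14 hne13 hne24

private lemma Fdef_12 : Fdef s w1 w2 w3 w4 a b a' b' c2 c4 f w1 w2 = a := by
  unfold Fdef
  rw [if_pos (Or.inl ⟨rfl, rfl⟩)]

private lemma Fdef_23 : Fdef s w1 w2 w3 w4 a b a' b' c2 c4 f w2 w3 = b := by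
  unfold Fdef
  rw [if_neg (by rintro (⟨h, -⟩ | ⟨-, h⟩) <;> simp_all), if_pos (Or.inl ⟨rfl, rfl⟩)]

private lemma Fdef_34 : Fdef s w1 w2 w3 w4 a b a' b' c2 c4 f w3 w4 = a' := by
  unfold Fdef
  rw [if_neg (by rintro (⟨h, -⟩ | ⟨-, h⟩) <;> simp_all),
    if_neg (by rintro (⟨h, -⟩ | ⟨-, h⟩) <;> simp_all), if_pos (Or.inl ⟨rfl, rfl⟩)]

private lemma Fdef_41 : Fdef s w1 w2 w3 w4 a b a' b' c2 c4 f w1 w4 = b' := by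
  unfold Fdef
  rw [if_neg (by rintro (⟨-, h⟩ | ⟨h, -⟩) <;> simp_all),
    if_neg (by rintro (⟨h, -⟩ | ⟨-, h⟩) <;> simp_all),
    if_neg (by rintro (⟨h, -⟩ | ⟨-, h⟩) <;> simp_all), if_pos (Or.inr ⟨rfl, rfl⟩)]

private lemma Fdef_2s (z : V) (hz1 : z ≠ w1) (hz2 : z ≠ w2) (hz3 : z ≠ w3) (hz4 : z ≠ w4) :
    Fdef s w1 w2 w3 w4 a b a' b' c2 c4 f w2 z = c2 := by
  unfold Fdef
  rw [if_neg (by rintro (⟨h, -⟩ | ⟨-, h⟩) <;> simp_all),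
    if_neg (by rintro (⟨-, h⟩ | ⟨h, -⟩) <;> simp_all),
    if_neg (by rintro (⟨h, -⟩ | ⟨h, -⟩) <;> simp_all),
    if_neg (by rintro (⟨h, -⟩ | ⟨h, -⟩) <;> simp_all), if_pos (Or.inl rfl)]

private lemma Fdef_4s (z : V) (hz1 : z ≠ w1) (hz2 : z ≠ w2) (hz3 : z ≠ w3) (hz4 : z ≠ w4) :
    Fdef s w1 w2 w3 w4 a b a' b' c2 c4 f w4 z = c4 := by
  unfold Fdef
  rw [if_neg (by rintro (⟨h, -⟩ | ⟨h, -⟩) <;> simp_all),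
    if_neg (by rintro (⟨h, -⟩ | ⟨-, h⟩) <;> simp_all),
    if_neg (by rintro (⟨h, -⟩ | ⟨-, h⟩) <;> simp_all),
    if_neg (by rintro (⟨-, h⟩ | ⟨h, -⟩) <;> simp_all),
    if_neg (by rintro (h | h) <;> simp_all [hne24.symm]), if_pos (Or.inl rfl)]

private lemma Fdef_ss (y z : V)
    (hy1 : y ≠ w1) (hy2 : y ≠ w2) (hy3 : y ≠ w3) (hy4 : y ≠ w4)
    (hz1 : z ≠ w1) (hz2 : z ≠ w2) (hz3 : z ≠ w3) (hz4 : z ≠ w4)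
    (hys : y ∈ s) (hzs : z ∈ s) :
    Fdef s w1 w2 w3 w4 a b a' b' c2 c4 f y z = f ⟨y, hys⟩ ⟨z, hzs⟩ := by
  unfold Fdef
  rw [if_neg (by rintro (⟨h, -⟩ | ⟨h, -⟩) <;> simp_all),
    if_neg (by rintro (⟨h, -⟩ | ⟨h, -⟩) <;> simp_all),
    if_neg (by rintro (⟨h, -⟩ | ⟨h, -⟩) <;> simp_all),
    if_neg (by rintro (⟨h, -⟩ | ⟨h, -⟩) <;> simp_all),
    if_neg (by rintro (h | h) <;> simp_all),
    if_neg (by rintro (h | h) <;> simp_all),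
    dif_pos ⟨hys, hzs⟩]

end FSec

/-- Reduction 3: deleting an induced 4-cycle two of whose opposite vertices have degree 2
does not change 3-edge-colorability, for triangle-free subcubic graphs. -/
theorem stmt7 {V : Type*} [Fintype V] [DecidableEq V] (H : SimpleGraph V)
    [DecidableRel H.Adj] (htf : H.CliqueFree 3) (hmax : ∀ w, H.degree w ≤ 3)
    (w1 w2 w3 w4 : V)
    (h12 : H.Adj w1 w2) (h23 : H.Adj w2 w3) (h34 : H.Adj w3 w4) (h41 : H.Adj w4 w1)
    (h13 : ¬ H.Adj w1 w3) (h24 : ¬ H.Adj w2 w4) (hne13 : w1 ≠ w3) (hne24 : w2 ≠ w4)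
    (hd1 : H.degree w1 = 2) (hd3 : H.degree w3 = 2) :
    H.EdgeColorable 3 ↔
      (H.induce {x | x ≠ w1 ∧ x ≠ w2 ∧ x ≠ w3 ∧ x ≠ w4}).EdgeColorable 3 := by
  classical
  set s : Set V := {x | x ≠ w1 ∧ x ≠ w2 ∧ x ≠ w3 ∧ x ≠ w4} with hs_def
  have hmem_s : ∀ z, z ∈ s ↔ z ≠ w1 ∧ z ≠ w2 ∧ z ≠ w3 ∧ z ≠ w4 := fun z => Iff.rfl
  -- basic distinctness
  have ne12 : w1 ≠ w2 := h12.ne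
  have ne23 : w2 ≠ w3 := h23.ne
  have ne34 : w3 ≠ w4 := h34.ne
  have ne14 : w1 ≠ w4 := h41.ne'
  -- neighbors of w1 and w3
  have hN1 : ∀ z, H.Adj w1 z → z = w2 ∨ z = w4 := by
    intro z hz
    by_contra hcon
    push_neg at hcon
    have hsub : ({w2, w4, z} : Finset V) ⊆ H.neighborFinset w1 := by
      intro t ht
      simp only [Finset.mem_insert, Finset.mem_singleton] at ht
      rw [SimpleGraph.mem_neighborFinset]
      rcases ht with rfl | rfl | rfl
      · exact h12
      · exact h41.symm
      · exact hz
    have hcard : ({w2, w4, z} : Finset V).card = 3 := by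
      rw [Finset.card_insert_of_notMem (by simp [hne24, hcon.1.symm]),
        Finset.card_insert_of_notMem (by simp [hcon.2.symm]), Finset.card_singleton]
    have := Finset.card_le_card hsub
    rw [hcard, SimpleGraph.card_neighborFinset_eq_degree, hd1] at this
    omega
  have hN3 : ∀ z, H.Adj w3 z → z = w2 ∨ z = w4 := by
    intro z hz
    by_contra hcon
    push_neg at hcon
    have hsub : ({w2, w4, z} : Finset V) ⊆ H.neighborFinset w3 := by
      intro t ht
      simp only [Finset.mem_insert, Finset.mem_singleton] at ht
      rw [SimpleGraph.mem_neighborFinset]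
      rcases ht with rfl | rfl | rfl
      · exact h23.symm
      · exact h34
      · exact hz
    have hcard : ({w2, w4, z} : Finset V).card = 3 := by
      rw [Finset.card_insert_of_notMem (by simp [hne24, hcon.1.symm]),
        Finset.card_insert_of_notMem (by simp [hcon.2.symm]), Finset.card_singleton]
    have := Finset.card_le_card hsub
    rw [hcard, SimpleGraph.card_neighborFinset_eq_degree, hd3] at this
    omega
  -- uniqueness of the outside neighbor of w2 and w4
  have hU2 : ∀ z z', H.Adj w2 z → H.Adj w2 z' → z ≠ w1 → z ≠ w3 → z' ≠ w1 → z' ≠ w3 →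
      z = z' := by
    intro z z' hz hz' hz1 hz3 hz1' hz3'
    by_contra hcon
    have hsub : ({w1, w3, z, z'} : Finset V) ⊆ H.neighborFinset w2 := by
      intro t ht
      simp only [Finset.mem_insert, Finset.mem_singleton] at ht
      rw [SimpleGraph.mem_neighborFinset]
      rcases ht with rfl | rfl | rfl | rfl
      · exact h12.symm
      · exact h23
      · exact hz
      · exact hz'
    have hcard : ({w1, w3, z, z'} : Finset V).card = 4 := by
      rw [Finset.card_insert_of_notMem (by simp [hne13, hz1.symm, hz1'.symm]),
        Finset.card_insert_of_notMem (by simp [hz3.symm, hz3'.symm]),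
        Finset.card_insert_of_notMem (by simp [hcon]), Finset.card_singleton]
    have := Finset.card_le_card hsub
    rw [hcard, SimpleGraph.card_neighborFinset_eq_degree] at this
    have := hmax w2
    omega
  have hU4 : ∀ z z', H.Adj w4 z → H.Adj w4 z' → z ≠ w1 → z ≠ w3 → z' ≠ w1 → z' ≠ w3 →
      z = z' := by
    intro z z' hz hz' hz1 hz3 hz1' hz3'
    by_contra hcon
    have hsub : ({w1, w3, z, z'} : Finset V) ⊆ H.neighborFinset w4 := by
      intro t ht
      simp only [Finset.mem_insert, Finset.mem_singleton] at ht
      rw [SimpleGraph.mem_neighborFinset]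
      rcases ht with rfl | rfl | rfl | rfl
      · exact h41
      · exact h34.symm
      · exact hz
      · exact hz'
    have hcard : ({w1, w3, z, z'} : Finset V).card = 4 := by
      rw [Finset.card_insert_of_notMem (by simp [hne13, hz1.symm, hz1'.symm]),
        Finset.card_insert_of_notMem (by simp [hz3.symm, hz3'.symm]),
        Finset.card_insert_of_notMem (by simp [hcon]), Finset.card_singleton]
    have := Finset.card_le_card hsub
    rw [hcard, SimpleGraph.card_neighborFinset_eq_degree] at this
    have := hmax w4
    omega
  -- membership of outside neighbors in s
  have hmem2 : ∀ z, H.Adj w2 z → z ≠ w1 → z ≠ w3 → z ∈ s := by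
    intro z hz hz1 hz3
    exact ⟨hz1, hz.ne', hz3, fun h => h24 (h ▸ hz)⟩
  have hmem4 : ∀ z, H.Adj w4 z → z ≠ w1 → z ≠ w3 → z ∈ s := by
    intro z hz hz1 hz3
    refine ⟨hz1, fun h => h24 (h ▸ hz).symm, hz3, hz.ne'⟩
  rw [bridge7, bridge7]
  constructor
  · rintro ⟨f, hsym, hf⟩
    refine ⟨fun a b => f ↑a ↑b, fun a b => hsym _ _, ?_⟩
    intro a b c hab hac hbc
    exact hf hab hac (fun h => hbc (Subtype.ext h))
  · rintro ⟨f, hsym, hf⟩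
    -- properness of f restated
    have hf' : ∀ (a b c : ↥s), H.Adj ↑a ↑b → H.Adj ↑a ↑c → b ≠ c → f a b ≠ f a c := by
      intro a b c hab hac hbc
      exact hf hab hac hbc
    -- forbidden colors at a vertex of s
    set forb : ↥s → Finset (Fin 3) :=
      fun z => ((Finset.univ : Finset ↥s).filter (fun z' : ↥s => H.Adj (z : V) (z' : V))).image
        (fun z' => f z z') with hforb_def
    -- cardinality bound for neighbors of w2 (or w4)
    have hcard_forb : ∀ (z : ↥s) (t : V), H.Adj t ↑z → t = w2 ∨ t = w4 →
        (forb z).card ≤ 2 := by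
      intro z t htz ht
      have himg : ((Finset.univ : Finset ↥s).filter (fun z' : ↥s => H.Adj (z : V) (z' : V))).image
          (Subtype.val) ⊆ (H.neighborFinset ↑z).erase t := by
        intro x hx
        simp only [Finset.mem_image, Finset.mem_filter, Finset.mem_univ, true_and] at hx
        obtain ⟨x', hx', rfl⟩ := hx
        rw [Finset.mem_erase, SimpleGraph.mem_neighborFinset]
        refine ⟨?_, hx'⟩
        rcases ht with rfl | rfl
        · exact x'.2.2.1
        · exact x'.2.2.2.2
      have hinj : ((Finset.univ : Finset ↥s).filter (fun z' : ↥s => H.Adj (z : V) (z' : V))).card =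
          (((Finset.univ : Finset ↥s).filter (fun z' : ↥s => H.Adj (z : V) (z' : V))).image
            (Subtype.val)).card := by
        rw [Finset.card_image_of_injective _ Subtype.val_injective]
      have h1 := Finset.card_le_card himg
      have h2 : ((H.neighborFinset ↑z).erase t).card ≤ 2 := by
        rw [Finset.card_erase_of_mem (by rw [SimpleGraph.mem_neighborFinset]; exact htz.symm)]
        have := hmax ↑z
        rw [← SimpleGraph.card_neighborFinset_eq_degree] at this
        omega
      calc (forb z).card ≤ ((Finset.univ : Finset ↥s).filter
            (fun z' : ↥s => H.Adj (z : V) (z' : V))).card := Finset.card_image_le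
        _ ≤ 2 := by rw [hinj]; omega
    have hcard_forb1 : ∀ (z : ↥s), H.Adj w2 ↑z → H.Adj w4 ↑z → (forb z).card ≤ 1 := by
      intro z h2z h4z
      have himg : ((Finset.univ : Finset ↥s).filter (fun z' : ↥s => H.Adj (z : V) (z' : V))).image
          (Subtype.val) ⊆ ((H.neighborFinset ↑z).erase w2).erase w4 := by
        intro x hx
        simp only [Finset.mem_image, Finset.mem_filter, Finset.mem_univ, true_and] at hx
        obtain ⟨x', hx', rfl⟩ := hx
        rw [Finset.mem_erase, Finset.mem_erase, SimpleGraph.mem_neighborFinset]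
        exact ⟨x'.2.2.2.2, x'.2.2.1, hx'⟩
      have hinj : ((Finset.univ : Finset ↥s).filter (fun z' : ↥s => H.Adj (z : V) (z' : V))).card =
          (((Finset.univ : Finset ↥s).filter (fun z' : ↥s => H.Adj (z : V) (z' : V))).image
            (Subtype.val)).card := by
        rw [Finset.card_image_of_injective _ Subtype.val_injective]
      have h1 := Finset.card_le_card himg
      have h2 : (((H.neighborFinset ↑z).erase w2).erase w4).card ≤ 1 := by
        rw [Finset.card_erase_of_mem, Finset.card_erase_of_mem]
        · have := hmax ↑z
          rw [← SimpleGraph.card_neighborFinset_eq_degree] at this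
          omega
        · rw [SimpleGraph.mem_neighborFinset]; exact h2z.symm
        · rw [Finset.mem_erase, SimpleGraph.mem_neighborFinset]
          exact ⟨hne24.symm, h4z.symm⟩
      calc (forb z).card ≤ ((Finset.univ : Finset ↥s).filter
            (fun z' : ↥s => H.Adj (z : V) (z' : V))).card := Finset.card_image_le
        _ ≤ 1 := by rw [hinj]; omega
    -- choosing an avoidable color
    have havoid : ∀ T : Finset (Fin 3), T.card ≤ 2 → ∃ c, c ∉ T := by
      intro T hT
      by_contra h
      push_neg at h
      have : (Finset.univ : Finset (Fin 3)) ⊆ T := fun c _ => h c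
      have := Finset.card_le_card this
      simp at this
      omega
    have havoid2 : ∀ T : Finset (Fin 3), T.card ≤ 1 → ∃ c c', c ≠ c' ∧ c ∉ T ∧ c' ∉ T := by
      intro T hT
      have hc : 1 < Tᶜ.card := by
        rw [Finset.card_compl]
        simp only [Fintype.card_fin]
        omega
      obtain ⟨c, hc1, c', hc2, hcc⟩ := Finset.one_lt_card.mp hc
      exact ⟨c, c', hcc, Finset.mem_compl.mp hc1, Finset.mem_compl.mp hc2⟩
    -- choose the colors c2, c4
    obtain ⟨c2, c4, hC2, hC4, hCC⟩ : ∃ c2 c4 : Fin 3,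
        (∀ (z z' : ↥s), H.Adj w2 ↑z → H.Adj ↑z ↑z' → f z z' ≠ c2) ∧
        (∀ (z z' : ↥s), H.Adj w4 ↑z → H.Adj ↑z ↑z' → f z z' ≠ c4) ∧
        (∀ z : ↥s, H.Adj w2 ↑z → H.Adj w4 ↑z → c2 ≠ c4) := by
      by_cases hboth : ∃ z : ↥s, H.Adj w2 ↑z ∧ H.Adj w4 ↑z
      · obtain ⟨x, hx2, hx4⟩ := hboth
        obtain ⟨c2, c4, hne', hc2, hc4⟩ := havoid2 _ (hcard_forb1 x hx2 hx4)
        refine ⟨c2, c4, ?_, ?_, fun _ _ _ => hne'⟩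
        · intro z z' hz2 hzz'
          have hzx : z = x := Subtype.ext (hU2 _ _ hz2 hx2 z.2.1 z.2.2.2.1 x.2.1 x.2.2.2.1)
          subst hzx
          intro h
          exact hc2 (Finset.mem_image.mpr ⟨z', Finset.mem_filter.mpr
            ⟨Finset.mem_univ _, hzz'⟩, h⟩)
        · intro z z' hz4 hzz'
          have hzx : z = x := Subtype.ext (hU4 _ _ hz4 hx4 z.2.1 z.2.2.2.1 x.2.1 x.2.2.2.1)
          subst hzx
          intro h
          exact hc4 (Finset.mem_image.mpr ⟨z', Finset.mem_filter.mpr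
            ⟨Finset.mem_univ _, hzz'⟩, h⟩)
      · have get2 : ∃ c2 : Fin 3, ∀ (z z' : ↥s), H.Adj w2 ↑z → H.Adj ↑z ↑z' →
            f z z' ≠ c2 := by
          by_cases h2 : ∃ z : ↥s, H.Adj w2 ↑z
          · obtain ⟨x, hx2⟩ := h2
            obtain ⟨c2, hc2⟩ := havoid _ (hcard_forb x w2 hx2 (Or.inl rfl))
            refine ⟨c2, ?_⟩
            intro z z' hz2 hzz'
            have hzx : z = x := Subtype.ext (hU2 _ _ hz2 hx2 z.2.1 z.2.2.2.1 x.2.1 x.2.2.2.1)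
            subst hzx
            intro h
            exact hc2 (Finset.mem_image.mpr ⟨z', Finset.mem_filter.mpr
              ⟨Finset.mem_univ _, hzz'⟩, h⟩)
          · exact ⟨0, fun z z' hz2 _ => absurd ⟨z, hz2⟩ h2⟩
        have get4 : ∃ c4 : Fin 3, ∀ (z z' : ↥s), H.Adj w4 ↑z → H.Adj ↑z ↑z' →
            f z z' ≠ c4 := by
          by_cases h4 : ∃ z : ↥s, H.Adj w4 ↑z
          · obtain ⟨x, hx4⟩ := h4
            obtain ⟨c4, hc4⟩ := havoid _ (hcard_forb x w4 hx4 (Or.inr rfl))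
            refine ⟨c4, ?_⟩
            intro z z' hz4 hzz'
            have hzx : z = x := Subtype.ext (hU4 _ _ hz4 hx4 z.2.1 z.2.2.2.1 x.2.1 x.2.2.2.1)
            subst hzx
            intro h
            exact hc4 (Finset.mem_image.mpr ⟨z', Finset.mem_filter.mpr
              ⟨Finset.mem_univ _, hzz'⟩, h⟩)
          · exact ⟨0, fun z z' hz4 _ => absurd ⟨z, hz4⟩ h4⟩
        obtain ⟨c2, hC2⟩ := get2
        obtain ⟨c4, hC4⟩ := get4
        exact ⟨c2, c4, hC2, hC4, fun z hz2 hz4 => absurd ⟨z, hz2, hz4⟩ hboth⟩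
    -- the cycle color scheme
    obtain ⟨a, b, a', b', hab, ha'b', hab', hba', hac2, hbc2, ha'c4, hb'c4⟩ :
        ∃ a b a' b' : Fin 3, a ≠ b ∧ a' ≠ b' ∧ a ≠ b' ∧ b ≠ a' ∧ a ≠ c2 ∧ b ≠ c2 ∧
          a' ≠ c4 ∧ b' ≠ c4 :=
      (by decide : ∀ x y : Fin 3, ∃ a b a' b' : Fin 3, a ≠ b ∧ a' ≠ b' ∧ a ≠ b' ∧ b ≠ a' ∧
        a ≠ x ∧ b ≠ x ∧ a' ≠ y ∧ b' ≠ y) c2 c4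
    -- the extended coloring
    set F : V → V → Fin 3 := Fdef s w1 w2 w3 w4 a b a' b' c2 c4 f with hF_def
    have hFsymm : ∀ u v, F u v = F v u := Fdef_symm a b a' b' c2 c4 f hsym
    have hF12 : F w1 w2 = a := Fdef_12 a b a' b' c2 c4 f ne12 ne23 ne34 ne14 hne13 hne24
    have hF23 : F w2 w3 = b := Fdef_23 a b a' b' c2 c4 f ne12 ne23 ne34 ne14 hne13 hne24
    have hF34 : F w3 w4 = a' := Fdef_34 a b a' b' c2 c4 f ne12 ne23 ne34 ne14 hne13 hne24
    have hF41 : F w1 w4 = b' := Fdef_41 a b a' b' c2 c4 f ne12 ne23 ne34 ne14 hne13 hne24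
    have hF2s : ∀ z, z ∈ s → F w2 z = c2 := fun z hz =>
      Fdef_2s a b a' b' c2 c4 f ne12 ne23 ne34 ne14 hne13 hne24 z hz.1 hz.2.1 hz.2.2.1 hz.2.2.2
    have hF4s : ∀ z, z ∈ s → F w4 z = c4 := fun z hz =>
      Fdef_4s a b a' b' c2 c4 f ne12 ne23 ne34 ne14 hne13 hne24 z hz.1 hz.2.1 hz.2.2.1 hz.2.2.2
    have hFss : ∀ (y z : V) (hys : y ∈ s) (hzs : z ∈ s),
        F y z = f ⟨y, hys⟩ ⟨z, hzs⟩ := fun y z hys hzs =>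
      Fdef_ss a b a' b' c2 c4 f ne12 ne23 ne34 ne14 hne13 hne24 y z
        hys.1 hys.2.1 hys.2.2.1 hys.2.2.2 hzs.1 hzs.2.1 hzs.2.2.1 hzs.2.2.2 hys hzs
    refine ⟨F, hFsymm, ?_⟩
    intro u v w huv huw hvw
    by_cases hu1 : u = w1
    · rw [hu1] at huv huw ⊢
      rcases hN1 v huv with rfl | rfl <;> rcases hN1 w huw with rfl | rfl
      · exact absurd rfl hvw
      · rw [hF12, hF41]; exact hab'
      · rw [hF41, hF12]; exact hab'.symm
      · exact absurd rfl hvw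
    by_cases hu3 : u = w3
    · rw [hu3] at huv huw ⊢
      rcases hN3 v huv with h2 | h4 <;> rcases hN3 w huw with h2' | h4'
      · exact absurd (h2.trans h2'.symm) hvw
      · rw [h2, h4', hFsymm w3 w2, hF23, hF34]; exact hba'
      · rw [h4, h2', hF34, hFsymm w3 w2, hF23]; exact hba'.symm
      · exact absurd (h4.trans h4'.symm) hvw
    by_cases hu2 : u = w2
    · rw [hu2] at huv huw ⊢
      have hclass : ∀ z, H.Adj w2 z → (z = w1 ∧ F w2 z = a) ∨ (z = w3 ∧ F w2 z = b) ∨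
          (z ∈ s ∧ F w2 z = c2) := by
        intro z hz
        by_cases hz1 : z = w1
        · exact Or.inl ⟨hz1, by rw [hz1, hFsymm w2 w1, hF12]⟩
        by_cases hz3 : z = w3
        · exact Or.inr (Or.inl ⟨hz3, by rw [hz3, hF23]⟩)
        · exact Or.inr (Or.inr ⟨hmem2 z hz hz1 hz3, hF2s z (hmem2 z hz hz1 hz3)⟩)
      rcases hclass v huv with ⟨hv1, hv⟩ | ⟨hv1, hv⟩ | ⟨hvs, hv⟩ <;>
        rcases hclass w huw with ⟨hw1, hw⟩ | ⟨hw1, hw⟩ | ⟨hws, hw⟩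
      · exact absurd (hv1.trans hw1.symm) hvw
      · rw [hv, hw]; exact hab
      · rw [hv, hw]; exact hac2
      · rw [hv, hw]; exact hab.symm
      · exact absurd (hv1.trans hw1.symm) hvw
      · rw [hv, hw]; exact hbc2
      · rw [hv, hw]; exact hac2.symm
      · rw [hv, hw]; exact hbc2.symm
      · exact absurd (hU2 v w huv huw hvs.1 hvs.2.2.1 hws.1 hws.2.2.1) hvw
    by_cases hu4 : u = w4
    · rw [hu4] at huv huw ⊢
      have hclass : ∀ z, H.Adj w4 z → (z = w1 ∧ F w4 z = b') ∨ (z = w3 ∧ F w4 z = a') ∨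
          (z ∈ s ∧ F w4 z = c4) := by
        intro z hz
        by_cases hz1 : z = w1
        · exact Or.inl ⟨hz1, by rw [hz1, hFsymm w4 w1, hF41]⟩
        by_cases hz3 : z = w3
        · exact Or.inr (Or.inl ⟨hz3, by rw [hz3, hFsymm w4 w3, hF34]⟩)
        · exact Or.inr (Or.inr ⟨hmem4 z hz hz1 hz3, hF4s z (hmem4 z hz hz1 hz3)⟩)
      rcases hclass v huv with ⟨hv1, hv⟩ | ⟨hv1, hv⟩ | ⟨hvs, hv⟩ <;>
        rcases hclass w huw with ⟨hw1, hw⟩ | ⟨hw1, hw⟩ | ⟨hws, hw⟩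
      · exact absurd (hv1.trans hw1.symm) hvw
      · rw [hv, hw]; exact ha'b'.symm
      · rw [hv, hw]; exact hb'c4
      · rw [hv, hw]; exact ha'b'
      · exact absurd (hv1.trans hw1.symm) hvw
      · rw [hv, hw]; exact ha'c4
      · rw [hv, hw]; exact hb'c4.symm
      · rw [hv, hw]; exact ha'c4.symm
      · exact absurd (hU4 v w huv huw hvs.1 hvs.2.2.1 hws.1 hws.2.2.1) hvw
    -- now u ∈ s
    have hus : u ∈ s := ⟨hu1, hu2, hu3, hu4⟩
    have hclass : ∀ z, H.Adj u z → (z = w2 ∧ F u z = c2) ∨ (z = w4 ∧ F u z = c4) ∨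
        ∃ hzs : z ∈ s, F u z = f ⟨u, hus⟩ ⟨z, hzs⟩ := by
      intro z hz
      by_cases hz1 : z = w1
      · rw [hz1] at hz
        rcases hN1 u hz.symm with h | h
        · exact absurd h hu2
        · exact absurd h hu4
      by_cases hz3 : z = w3
      · rw [hz3] at hz
        rcases hN3 u hz.symm with h | h
        · exact absurd h hu2
        · exact absurd h hu4
      by_cases hz2 : z = w2
      · exact Or.inl ⟨hz2, by rw [hz2, hFsymm u w2, hF2s u hus]⟩
      by_cases hz4 : z = w4
      · exact Or.inr (Or.inl ⟨hz4, by rw [hz4, hFsymm u w4, hF4s u hus]⟩)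
      · exact Or.inr (Or.inr ⟨⟨hz1, hz2, hz3, hz4⟩, hFss u z hus ⟨hz1, hz2, hz3, hz4⟩⟩)
    rcases hclass v huv with ⟨hv1, hv⟩ | ⟨hv1, hv⟩ | ⟨hvs, hv⟩ <;>
      rcases hclass w huw with ⟨hw1, hw⟩ | ⟨hw1, hw⟩ | ⟨hws, hw⟩
    · exact absurd (hv1.trans hw1.symm) hvw
    · rw [hv, hw]
      exact hCC ⟨u, hus⟩ (hv1 ▸ huv.symm) (hw1 ▸ huw.symm)
    · rw [hv, hw]
      exact (hC2 ⟨u, hus⟩ ⟨w, hws⟩ (hv1 ▸ huv.symm) huw).symm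
    · rw [hv, hw]
      exact (hCC ⟨u, hus⟩ (hw1 ▸ huw.symm) (hv1 ▸ huv.symm)).symm
    · exact absurd (hv1.trans hw1.symm) hvw
    · rw [hv, hw]
      exact (hC4 ⟨u, hus⟩ ⟨w, hws⟩ (hv1 ▸ huv.symm) huw).symm
    · rw [hv, hw]
      exact hC2 ⟨u, hus⟩ ⟨v, hvs⟩ (hw1 ▸ huw.symm) huv
    · rw [hv, hw]
      exact hC4 ⟨u, hus⟩ ⟨v, hvs⟩ (hw1 ▸ huw.symm) huv
    · rw [hv, hw]
      exact hf' ⟨u, hus⟩ ⟨v, hvs⟩ ⟨w, hws⟩ huv huw (fun h => hvw (congrArg Subtype.val h))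
end

section
/- A graph G is (K4, claw, diamond)-free if and only if G is the line graph of some triangle-free graph with maximum degree at most 3. -/
/-!
If `H` is triangle-free, three pairwise adjacent edges of `H` share an end. So in `L(H)` two
common neighbours of adjacent edges share their common end and are adjacent (no diamond), and a
4-clique of `L(H)` consists of four edges at one vertex, which maximum degree 3 forbids. Every
line graph is claw-free, as two of three edges meeting an edge `e` meet it at the same end.

Conversely, if `G` is diamond-free, two maximal cliques meet in at most one vertex, and if `G`
is moreover claw-free, every vertex lies in at most two maximal cliques. Hence `G` is the line
graph of the graph `H` on the maximal cliques of `G` plus one pendant vertex for each vertex of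
`G` lying in a single maximal clique. A triangle of `H` would come from a triangle of `G` whose
maximal clique is an end of all three corresponding edges, and `K₄`-freeness bounds the clique
sizes, hence the degrees of `H`, by 3.
-/

/-- The claw `K_{1,3}`. -/
def claw : SimpleGraph (Fin 1 ⊕ Fin 3) := completeBipartiteGraph (Fin 1) (Fin 3)

/-- The diamond, i.e. `K₄` minus one edge (the edge between `2` and `3`). -/
def diamond : SimpleGraph (Fin 4) :=
  SimpleGraph.fromEdgeSet {s(0, 1), s(0, 2), s(1, 2), s(0, 3), s(1, 3)}

namespace SimpleGraph
variable {V : Type*} {G : SimpleGraph V}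

theorem isEmpty_claw_embedding_iff :
    IsEmpty (claw ↪g G) ↔ ∀ ⦃v a b c : V⦄, G.Adj v a → G.Adj v b → G.Adj v c →
      a ≠ b → a ≠ c → b ≠ c → G.Adj a b ∨ G.Adj a c ∨ G.Adj b c := by
  constructor
  · intro h v a b c hva hvb hvc hab hac hbc
    by_contra! hind
    let f : Fin 1 ⊕ Fin 3 → V := Sum.elim (fun _ => v) ![a, b, c]
    have hf : ∀ x y, G.Adj (f x) (f y) ↔ claw.Adj x y := by
      rintro (x | x) (y | y) <;> fin_cases x <;> (try fin_cases y) <;>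
        simp [f, claw, hva, hvb, hvc, hva.symm, hvb.symm, hvc.symm, hind, G.adj_comm b a,
          G.adj_comm c a, G.adj_comm c b]
    have hinj : Function.Injective f := by
      rintro (x | x) (y | y) hxy <;> fin_cases x <;> (try fin_cases y) <;>
        simp_all [f, hva.ne, hvb.ne, hvc.ne, hva.ne', hvb.ne', hvc.ne', hab.symm, hac.symm,
          hbc.symm]
    exact h.false ⟨⟨f, hinj⟩, hf _ _⟩
  · refine fun h => ⟨fun f => ?_⟩
    have hf : ∀ x y, G.Adj (f x) (f y) ↔ claw.Adj x y := fun _ _ => f.map_rel_iff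
    have hne : ∀ i j : Fin 3, i ≠ j → f (.inr i) ≠ f (.inr j) := fun i j hij =>
      f.injective.ne (by simpa using hij)
    have hcenter : ∀ i, G.Adj (f (.inl 0)) (f (.inr i)) := fun i => (hf _ _).2 (by simp [claw])
    rcases h (hcenter 0) (hcenter 1) (hcenter 2) (hne 0 1 (by decide)) (hne 0 2 (by decide))
      (hne 1 2 (by decide)) with h | h | h <;> simpa [claw] using (hf _ _).1 h

theorem isEmpty_diamond_embedding_iff :
    IsEmpty (diamond ↪g G) ↔ ∀ ⦃a b c d : V⦄, G.Adj a b → G.Adj a c → G.Adj b c →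
      G.Adj a d → G.Adj b d → c ≠ d → G.Adj c d := by
  have hdiamond : ∀ x y, diamond.Adj x y ↔ x ≠ y ∧ s(x, y) ≠ s(2, 3) := by
    simp only [diamond, fromEdgeSet_adj, Set.mem_insert_iff, Set.mem_singleton_iff]
    decide
  constructor
  · intro h a b c d hab hac hbc had hbd hcd
    by_contra hncd
    let f : Fin 4 → V := ![a, b, c, d]
    have hf : ∀ x y, G.Adj (f x) (f y) ↔ diamond.Adj x y := by
      intro x y
      fin_cases x <;> fin_cases y <;>
        simp [f, hdiamond, hab, hac, hbc, had, hbd, hab.symm, hac.symm, hbc.symm, had.symm,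
          hbd.symm, hncd, G.adj_comm d c]
    have hinj : Function.Injective f := by
      intro x y hxy
      fin_cases x <;> fin_cases y <;>
        simp_all [f, hab.ne, hac.ne, hbc.ne, had.ne, hbd.ne, hab.ne', hac.ne', hbc.ne', had.ne',
          hbd.ne', hcd.symm]
    exact h.false ⟨⟨f, hinj⟩, hf _ _⟩
  · refine fun h => ⟨fun f => ?_⟩
    have hf : ∀ x y, G.Adj (f x) (f y) ↔ x ≠ y ∧ s(x, y) ≠ s(2, 3) := fun x y =>
      f.map_rel_iff.trans (hdiamond x y)
    have := h ((hf 0 1).2 (by decide)) ((hf 0 2).2 (by decide)) ((hf 1 2).2 (by decide))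
      ((hf 0 3).2 (by decide)) ((hf 1 3).2 (by decide)) (f.injective.ne (by decide))
    exact absurd ((hf 2 3).1 this) (by decide)

theorem IsClique.ncard_lt_of_cliqueFree {s : Set V} {n : ℕ} (hn : G.CliqueFree n)
    (hs : G.IsClique s) : s.ncard < n := by
  by_contra! h
  rcases Nat.eq_zero_or_pos n with rfl | hn0
  · exact not_cliqueFree_zero hn
  obtain ⟨t, hts, ht⟩ := Set.exists_subset_card_eq h
  have htf : t.Finite := Set.finite_of_ncard_pos (ht ▸ hn0)
  exact hn htf.toFinset
    ⟨by simpa using hs.subset hts, by rwa [← Set.ncard_eq_toFinset_card t htf]⟩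

theorem ncard_incidenceSet (v : V) : (G.incidenceSet v).ncard = (G.neighborSet v).ncard := by
  classical exact Set.ncard_congr' (G.incidenceSetEquivNeighborSet v)

section MaximalClique

variable {s t r : Set V} {u v a x : V}

theorem mem_maximal_isClique_of_adj (hd : IsEmpty (diamond ↪g G))
    (hs : Maximal G.IsClique s) (hv : v ∈ s) (ha : a ∈ s) (hav : a ≠ v) (hvx : G.Adj v x)
    (hax : G.Adj a x) : x ∈ s := by
  refine hs.2 (hs.1.insert fun y hy hxy => ?_) (Set.subset_insert x s) (Set.mem_insert x s)
  rcases eq_or_ne y v with rfl | hyv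
  · exact hvx.symm
  rcases eq_or_ne y a with rfl | hya
  · exact hax.symm
  exact isEmpty_diamond_embedding_iff.1 hd (hs.1 hv ha hav.symm) hvx hax
    (hs.1 hv hy hyv.symm) (hs.1 ha hy hya.symm) hxy

theorem maximal_isClique_eq_of_mem_of_mem (hd : IsEmpty (diamond ↪g G))
    (hs : Maximal G.IsClique s) (ht : Maximal G.IsClique t) (huv : u ≠ v) (hus : u ∈ s)
    (hvs : v ∈ s) (hut : u ∈ t) (hvt : v ∈ t) : s = t := by
  refine (ht.eq_of_subset hs.1 fun x hx => ?_).symm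
  rcases eq_or_ne x v with rfl | hxv
  · exact hvs
  rcases eq_or_ne x u with rfl | hxu
  · exact hus
  exact mem_maximal_isClique_of_adj hd hs hvs hus huv (ht.1 hvt hx hxv.symm)
    (ht.1 hut hx hxu.symm)

theorem maximal_isClique_exists_mem_ne (hs : Maximal G.IsClique s) (ht : Maximal G.IsClique t)
    (hst : s ≠ t) (hvt : v ∈ t) : ∃ a ∈ s, a ≠ v := by
  by_contra! h
  exact hst (hs.eq_of_subset ht.1 fun a ha => h a ha ▸ hvt)

theorem maximal_isClique_eq_of_eq_or_adj (hd : IsEmpty (diamond ↪g G))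
    (hs : Maximal G.IsClique s) (ht : Maximal G.IsClique t) (hvs : v ∈ s) (hvt : v ∈ t)
    (ha : a ∈ s) (hav : a ≠ v) (hx : x ∈ t) (hxv : x ≠ v) (hax : a = x ∨ G.Adj a x) :
    s = t := by
  rcases hax with rfl | hax
  · exact maximal_isClique_eq_of_mem_of_mem hd hs ht hav ha hvs hx hvt
  · exact maximal_isClique_eq_of_mem_of_mem hd hs ht hxv
      (mem_maximal_isClique_of_adj hd hs hvs ha hav (ht.1 hvt hx hxv.symm) hax) hvs hx hvt

theorem maximal_isClique_eq_or_eq_of_mem (hcl : IsEmpty (claw ↪g G))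
    (hd : IsEmpty (diamond ↪g G)) (hs : Maximal G.IsClique s) (ht : Maximal G.IsClique t)
    (hr : Maximal G.IsClique r) (hst : s ≠ t) (hvs : v ∈ s) (hvt : v ∈ t) (hvr : v ∈ r) :
    r = s ∨ r = t := by
  by_contra! hr'
  obtain ⟨a, has, hav⟩ := maximal_isClique_exists_mem_ne hs ht hst hvt
  obtain ⟨b, hbt, hbv⟩ := maximal_isClique_exists_mem_ne ht hs hst.symm hvs
  obtain ⟨c, hcr, hcv⟩ := maximal_isClique_exists_mem_ne hr hs hr'.1 hvs
  have hab : ¬(a = b ∨ G.Adj a b) := fun h =>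
    hst (maximal_isClique_eq_of_eq_or_adj hd hs ht hvs hvt has hav hbt hbv h)
  have hac : ¬(a = c ∨ G.Adj a c) := fun h =>
    hr'.1 (maximal_isClique_eq_of_eq_or_adj hd hs hr hvs hvr has hav hcr hcv h).symm
  have hbc : ¬(b = c ∨ G.Adj b c) := fun h =>
    hr'.2 (maximal_isClique_eq_of_eq_or_adj hd ht hr hvt hvr hbt hbv hcr hcv h).symm
  rw [not_or] at hab hac hbc
  rcases isEmpty_claw_embedding_iff.1 hcl (hs.1 hvs has hav.symm) (ht.1 hvt hbt hbv.symm)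
    (hr.1 hvr hcr hcv.symm) hab.1 hac.1 hbc.1 with h | h | h
  exacts [hab.2 h, hac.2 h, hbc.2 h]

end MaximalClique

section EdgeRepresentation

variable {W : Type*}

/-- `φ` exhibits `G` as the line graph of the graph on `W` whose edges are the `φ v`. -/
structure IsEdgeRepresentation (G : SimpleGraph V) (φ : V → Sym2 W) : Prop where
  not_isDiag : ∀ v, ¬(φ v).IsDiag
  injective : Function.Injective φ
  adj_iff : ∀ u v, G.Adj u v ↔ u ≠ v ∧ ∃ w, w ∈ φ u ∧ w ∈ φ v

variable {φ : V → Sym2 W}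

theorem IsEdgeRepresentation.edgeSet_fromEdgeSet (hφ : IsEdgeRepresentation G φ) :
    (fromEdgeSet (Set.range φ)).edgeSet = Set.range φ := by
  rw [SimpleGraph.edgeSet_fromEdgeSet, sdiff_eq_left, Set.disjoint_left]
  rintro _ ⟨v, rfl⟩
  exact hφ.not_isDiag v

theorem IsEdgeRepresentation.nonempty_iso (hφ : IsEdgeRepresentation G φ) :
    Nonempty (G ≃g (fromEdgeSet (Set.range φ)).lineGraph) :=
  ⟨{ toEquiv := (Equiv.ofInjective φ hφ.injective).trans
        (Equiv.setCongr hφ.edgeSet_fromEdgeSet.symm)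
     map_rel_iff' := by
       intro u v
       simp [lineGraph_adj_iff_exists, hφ.adj_iff, hφ.injective.eq_iff, Subtype.ext_iff] }⟩

theorem IsEdgeRepresentation.cliqueFree_three (hφ : IsEdgeRepresentation G φ)
    (htri : ∀ ⦃u v w⦄, G.Adj u v → G.Adj u w → G.Adj v w →
      ∃ x, x ∈ φ u ∧ x ∈ φ v ∧ x ∈ φ w) :
    (fromEdgeSet (Set.range φ)).CliqueFree 3 := by
  classical
  intro t ht
  obtain ⟨x, y, z, hxy, hxz, hyz, -⟩ := is3Clique_iff.1 ht
  rw [fromEdgeSet_adj] at hxy hxz hyz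
  obtain ⟨⟨u, hu⟩, hxy⟩ := hxy
  obtain ⟨⟨v, hv⟩, hxz⟩ := hxz
  obtain ⟨⟨w, hw⟩, hyz⟩ := hyz
  have adj : ∀ {a b p}, φ a ≠ φ b → p ∈ φ a → p ∈ φ b → G.Adj a b :=
    fun hne ha hb => (hφ.adj_iff _ _).2 ⟨fun h => hne (h ▸ rfl), _, ha, hb⟩
  have huv : G.Adj u v :=
    adj (p := x) (by rw [hu, hv, Ne, Sym2.eq_iff]; tauto) (by simp [hu]) (by simp [hv])
  have huw : G.Adj u w :=
    adj (p := y) (by rw [hu, hw, Ne, Sym2.eq_iff]; tauto) (by simp [hu]) (by simp [hw])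
  have hvw : G.Adj v w :=
    adj (p := z) (by rw [hv, hw, Ne, Sym2.eq_iff]; tauto) (by simp [hv]) (by simp [hw])
  obtain ⟨p, hpu, hpv, hpw⟩ := htri huv huw hvw
  rw [hu, Sym2.mem_iff] at hpu
  rw [hv, Sym2.mem_iff] at hpv
  rw [hw, Sym2.mem_iff] at hpw
  rcases hpu with rfl | rfl <;> tauto

theorem ncard_neighborSet_fromEdgeSet_range_le [Finite V] (φ : V → Sym2 W) (x : W) :
    ((fromEdgeSet (Set.range φ)).neighborSet x).ncard ≤ {v | x ∈ φ v}.ncard := by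
  rw [← ncard_incidenceSet]
  calc _ ≤ (φ '' {v | x ∈ φ v}).ncard := Set.ncard_le_ncard ?_ (Set.toFinite _)
    _ ≤ _ := Set.ncard_image_le (Set.toFinite _)
  rintro e ⟨he, hx⟩
  rw [SimpleGraph.edgeSet_fromEdgeSet] at he
  obtain ⟨v, rfl⟩ := he.1
  exact ⟨v, hx, rfl⟩

end EdgeRepresentation

section CliqueGraph

abbrev MaxClique (G : SimpleGraph V) : Type _ := {s : Set V // Maximal G.IsClique s}

/-- The edge representing `v` joins the two maximal cliques containing `v`, or, if there is
only one, joins it to the pendant vertex `inr v`. -/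
theorem exists_sym2_maxClique [Finite V] (hcl : IsEmpty (claw ↪g G))
    (hd : IsEmpty (diamond ↪g G)) (v : V) :
    ∃ z : Sym2 (MaxClique G ⊕ V), ¬z.IsDiag ∧
      (∀ s : MaxClique G, .inl s ∈ z ↔ v ∈ s.1) ∧ ∀ u, .inr u ∈ z → u = v := by
  obtain ⟨s, hvs, hs⟩ := Finite.exists_le_maximal (G.isClique_singleton v)
  by_cases h : ∃ t : MaxClique G, v ∈ t.1 ∧ t ≠ ⟨s, hs⟩
  · obtain ⟨t, hvt, hts⟩ := h
    refine ⟨s(.inl ⟨s, hs⟩, .inl t), by simpa using hts.symm, fun r => ?_, by simp⟩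
    simp only [Sym2.mem_iff, Sum.inl.injEq]
    refine ⟨by rintro (rfl | rfl); exacts [hvs rfl, hvt], fun hvr => ?_⟩
    rcases maximal_isClique_eq_or_eq_of_mem hcl hd hs t.2 r.2
      (fun h => hts (Subtype.ext h).symm) (hvs rfl) hvt hvr with h | h
    exacts [.inl (Subtype.ext h), .inr (Subtype.ext h)]
  · push Not at h
    refine ⟨s(.inl ⟨s, hs⟩, .inr v), by simp, fun r => ?_, by simp⟩
    simp only [Sym2.mem_iff, Sum.inl.injEq, reduceCtorEq, or_false]
    exact ⟨by rintro rfl; exact hvs rfl, fun hvr => h r hvr⟩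

variable {φ : V → Sym2 (MaxClique G ⊕ V)}

theorem isEdgeRepresentation_of_mem_iff [Finite V] (hd : IsEmpty (diamond ↪g G))
    (hdiag : ∀ v, ¬(φ v).IsDiag) (hinl : ∀ v s, .inl s ∈ φ v ↔ v ∈ s.1)
    (hinr : ∀ v u, .inr u ∈ φ v → u = v) : IsEdgeRepresentation G φ where
  not_isDiag := hdiag
  injective u v huv := by
    by_contra hne
    obtain ⟨s, hus, hs⟩ := Finite.exists_le_maximal (G.isClique_singleton u)
    have hsu : .inl ⟨s, hs⟩ ∈ φ u := (hinl u _).2 (hus rfl)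
    obtain ⟨y, hy⟩ := Sym2.mem_iff_exists.1 hsu
    have hyu : y ∈ φ u := hy ▸ Sym2.mem_mk_right _ _
    rcases y with t | w
    · refine hdiag u (hy ▸ Sym2.mk_isDiag_iff.2 (congrArg _ (Subtype.ext ?_)))
      exact maximal_isClique_eq_of_mem_of_mem hd hs t.2 hne (hus rfl)
        ((hinl v _).1 (huv ▸ hsu)) ((hinl u t).1 hyu) ((hinl v t).1 (huv ▸ hyu))
    · exact hne ((hinr u w hyu).symm.trans (hinr v w (huv ▸ hyu)))
  adj_iff u v := by
    refine ⟨fun h => ?_, ?_⟩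
    · obtain ⟨s, hsub, hs⟩ := Finite.exists_le_maximal (G.isClique_pair.2 fun _ => h)
      exact ⟨h.ne, .inl ⟨s, hs⟩, (hinl _ _).2 (hsub (by simp)),
        (hinl _ _).2 (hsub (by simp))⟩
    · rintro ⟨hne, s | w, hu, hv⟩
      · exact s.2.1 ((hinl _ _).1 hu) ((hinl _ _).1 hv) hne
      · exact absurd ((hinr _ _ hu).symm.trans (hinr _ _ hv)) hne

theorem exists_mem_of_adj_of_mem_iff [Finite V] (hinl : ∀ v s, .inl s ∈ φ v ↔ v ∈ s.1)
    {u v w : V} (huv : G.Adj u v) (huw : G.Adj u w) (hvw : G.Adj v w) :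
    ∃ x, x ∈ φ u ∧ x ∈ φ v ∧ x ∈ φ w := by
  classical
  obtain ⟨s, hsub, hs⟩ :=
    Finite.exists_le_maximal (is3Clique_triple_iff.2 ⟨huv, huw, hvw⟩).isClique
  exact ⟨.inl ⟨s, hs⟩, (hinl _ _).2 (hsub (by simp)), (hinl _ _).2 (hsub (by simp)),
    (hinl _ _).2 (hsub (by simp))⟩

theorem ncard_setOf_mem_le_three (h4 : G.CliqueFree 4)
    (hinl : ∀ v s, .inl s ∈ φ v ↔ v ∈ s.1) (hinr : ∀ v u, .inr u ∈ φ v → u = v)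
    (x : MaxClique G ⊕ V) : {v | x ∈ φ v}.ncard ≤ 3 := by
  rcases x with s | u
  · simp only [hinl, Set.ofPred_mem_eq]
    exact Nat.le_of_lt_succ (s.2.1.ncard_lt_of_cliqueFree h4)
  · calc _ ≤ ({u} : Set V).ncard := Set.ncard_le_ncard fun v hv => (hinr v u hv).symm
      _ ≤ 3 := by simp

end CliqueGraph

section LineGraph

variable {W : Type*} {H : SimpleGraph W}

theorem exists_mem_of_lineGraph_triangle (h3 : H.CliqueFree 3) {e f g : H.edgeSet}
    (hef : H.lineGraph.Adj e f) (heg : H.lineGraph.Adj e g) (hfg : H.lineGraph.Adj f g) :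
    ∃ x, x ∈ (e : Sym2 W) ∧ x ∈ (f : Sym2 W) ∧ x ∈ (g : Sym2 W) := by
  classical
  obtain ⟨-, x, hxe, hxf⟩ := lineGraph_adj_iff_exists.1 hef
  obtain ⟨-, y, hye, hyg⟩ := lineGraph_adj_iff_exists.1 heg
  obtain ⟨-, z, hzf, hzg⟩ := lineGraph_adj_iff_exists.1 hfg
  by_contra! h
  have adj : ∀ {a b} (e : H.edgeSet), a ≠ b → a ∈ (e : Sym2 W) → b ∈ (e : Sym2 W) →
      H.Adj a b := fun e hab ha hb => H.adj_iff_exists_edge.2 ⟨hab, e, e.2, ha, hb⟩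
  have hxy : x ≠ y := by rintro rfl; exact h x hxe hxf hyg
  have hxz : x ≠ z := by rintro rfl; exact h x hxe hxf hzg
  have hyz : y ≠ z := by rintro rfl; exact h y hye hzf hyg
  exact h3 {x, y, z}
    (is3Clique_triple_iff.2 ⟨adj e hxy hxe hye, adj f hxz hxf hzf, adj g hyz hyg hzg⟩)

theorem exists_mem_forall_of_lineGraph_adj (h3 : H.CliqueFree 3) {e f : H.edgeSet}
    (hef : H.lineGraph.Adj e f) :
    ∃ x, x ∈ (e : Sym2 W) ∧ x ∈ (f : Sym2 W) ∧
      ∀ g, H.lineGraph.Adj e g → H.lineGraph.Adj f g → x ∈ (g : Sym2 W) := by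
  obtain ⟨hne, x, hxe, hxf⟩ := lineGraph_adj_iff_exists.1 hef
  refine ⟨x, hxe, hxf, fun g heg hfg => ?_⟩
  obtain ⟨y, hye, hyf, hyg⟩ := exists_mem_of_lineGraph_triangle h3 hef heg hfg
  obtain rfl | hxy := eq_or_ne x y
  · exact hyg
  · exact absurd (Subtype.ext (Sym2.eq_of_ne_mem hxy hxe hye hxf hyf)) hne

theorem isEmpty_claw_embedding_lineGraph : IsEmpty (claw ↪g H.lineGraph) := by
  refine isEmpty_claw_embedding_iff.2 fun e a b c hea heb hec hab hac hbc => ?_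
  obtain ⟨-, p, hpe, hpa⟩ := lineGraph_adj_iff_exists.1 hea
  obtain ⟨-, q, hqe, hqb⟩ := lineGraph_adj_iff_exists.1 heb
  obtain ⟨-, r, hre, hrc⟩ := lineGraph_adj_iff_exists.1 hec
  have adj : ∀ {f g : H.edgeSet} {x}, f ≠ g → x ∈ (f : Sym2 W) → x ∈ (g : Sym2 W) →
      H.lineGraph.Adj f g := fun hfg hf hg => lineGraph_adj_iff_exists.2 ⟨hfg, _, hf, hg⟩
  obtain ⟨y, hy⟩ := Sym2.mem_iff_exists.1 hpe
  rw [hy, Sym2.mem_iff] at hqe hre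
  obtain rfl | rfl := hqe
  · exact .inl (adj hab hpa hqb)
  obtain rfl | rfl := hre
  · exact .inr (.inl (adj hac hpa hrc))
  · exact .inr (.inr (adj hbc hqb hrc))

theorem isEmpty_diamond_embedding_lineGraph (h3 : H.CliqueFree 3) :
    IsEmpty (diamond ↪g H.lineGraph) := by
  refine isEmpty_diamond_embedding_iff.2 fun a b c d hab hac hbc had hbd hcd => ?_
  obtain ⟨x, -, -, hx⟩ := exists_mem_forall_of_lineGraph_adj h3 hab
  exact lineGraph_adj_iff_exists.2 ⟨hcd, x, hx c hac hbc, hx d had hbd⟩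

theorem cliqueFree_four_lineGraph [Finite W] (h3 : H.CliqueFree 3)
    (hdeg : ∀ w, (H.neighborSet w).ncard ≤ 3) : H.lineGraph.CliqueFree 4 := by
  intro t ht
  obtain ⟨e, he, f, hf, hef⟩ := Finset.one_lt_card.1 (by rw [ht.card_eq]; decide)
  obtain ⟨x, hxe, hxf, hx⟩ :=
    exists_mem_forall_of_lineGraph_adj h3 (ht.isClique he hf hef)
  have hsub : Subtype.val '' (t : Set H.edgeSet) ⊆ H.incidenceSet x := by
    rintro _ ⟨g, hg, rfl⟩
    refine ⟨g.2, ?_⟩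
    obtain rfl | hge := eq_or_ne g e
    · exact hxe
    obtain rfl | hgf := eq_or_ne g f
    · exact hxf
    exact hx g (ht.isClique he hg hge.symm) (ht.isClique hf hg hgf.symm)
  have := Set.ncard_le_ncard hsub (Set.toFinite _)
  rw [Set.ncard_image_of_injective _ Subtype.val_injective, Set.ncard_coe_finset, ht.card_eq,
    ncard_incidenceSet] at this
  have := hdeg x
  lia

end LineGraph

theorem exists_fin_of_iso_lineGraph {W : Type*} [Finite W] {H : SimpleGraph W}
    (h3 : H.CliqueFree 3) (hdeg : ∀ w, (H.neighborSet w).ncard ≤ 3) (ψ : G ≃g H.lineGraph) :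
    ∃ (W : Type) (_ : Fintype W) (H : SimpleGraph W), H.CliqueFree 3 ∧
      (∀ w : W, (H.neighborSet w).ncard ≤ 3) ∧ Nonempty (G ≃g H.lineGraph) := by
  let ι := Iso.map (Finite.equivFin W) H
  refine ⟨_, inferInstance, _, h3.comap ι.symm.isContained, fun w => ?_,
    ⟨ψ.trans ι.lineGraph⟩⟩
  obtain ⟨w, rfl⟩ := ι.surjective w
  rw [← ι.image_neighborSet, Set.ncard_image_of_injective _ ι.injective]
  exact hdeg w

end SimpleGraph

open SimpleGraph

/-- A graph is `(K₄, claw, diamond)`-free iff it is the line graph of a triangle-free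
graph of maximum degree at most 3. -/
theorem stmt9 {V : Type*} [Fintype V] (G : SimpleGraph V) :
    (G.CliqueFree 4 ∧ IsEmpty (claw ↪g G) ∧ IsEmpty (diamond ↪g G)) ↔
      ∃ (W : Type) (_ : Fintype W) (H : SimpleGraph W), H.CliqueFree 3 ∧
        (∀ w : W, (H.neighborSet w).ncard ≤ 3) ∧ Nonempty (G ≃g H.lineGraph) := by
  constructor
  · rintro ⟨h4, hcl, hd⟩
    choose φ hdiag hinl hinr using exists_sym2_maxClique hcl hd
    have hφ := isEdgeRepresentation_of_mem_iff hd hdiag hinl hinr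
    obtain ⟨ψ⟩ := hφ.nonempty_iso
    exact exists_fin_of_iso_lineGraph
      (hφ.cliqueFree_three fun _ _ _ => exists_mem_of_adj_of_mem_iff hinl)
      (fun x => (ncard_neighborSet_fromEdgeSet_range_le φ x).trans
        (ncard_setOf_mem_le_three h4 hinl hinr x)) ψ
  · rintro ⟨W, _, H, h3, hdeg, ⟨ψ⟩⟩
    exact ⟨(cliqueFree_four_lineGraph h3 hdeg).comap ψ.isContained,
      ⟨fun f => isEmpty_claw_embedding_lineGraph.false (ψ.toEmbedding.comp f)⟩,
      ⟨fun f => (isEmpty_diamond_embedding_lineGraph h3).false (ψ.toEmbedding.comp f)⟩⟩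
end

section
/- Let H be a connected Hamiltonian subcubic graph on an odd number of vertices with Hamiltonian cycle v1…v_{2p+1}, and suppose there exists an index i such that deg(v_{i−1}) = deg(v_{i+1}) = 2 (indices mod 2p+1). Then χ'(H) = 3. -/
/-- The chromatic index of `H`, i.e. the chromatic number of its line graph. -/
noncomputable def SimpleGraph.chromaticIndex {V : Type*} (H : SimpleGraph V) : ℕ∞ :=
  H.lineGraph.chromaticNumber

/-!
Rotate the cycle so that the two degree-2 vertices sit at positions `±1`. Colour the cycle edge
`{k, k + 1}` with `0` if `k = 0`, with `1` if `k = 1`, with `2` if `k ≥ 2` is even, and with `0`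
or `1` if `k ≥ 3` is odd; a chord at `z` must then take the colour of `{0, 1}` missing at `z`.
If the odd edges are chosen through a set `S` of positions (the edge `{k, k + 1}` gets `0` iff
`k ∈ S`, a chord at `S` gets `1`), the colouring is proper as soon as `S` contains `0` but not `2`
and is a union of classes of the two matchings formed by the chords and by the pairs
`{3, 4}, {5, 6}, …, {2p - 3, 2p - 2}`. Take for `S` the class of `0`. In a union of two matchings
the class of a point left unmatched by one of them is a path ending there, so it contains at most
one of the other unmatched points `2` and `-2`; if it contains `2`, reflect the cycle.
The cycle edges form an odd cycle of the line graph, which gives the lower bound.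
-/

open Function Relation

theorem MulAction.zpow_smul_eq_of_zpow_two_mul_smul_eq {G α : Type*} [Group G] [MulAction G α]
    {g : G} {a : α} {m l : ℤ} (hm : g ^ (2 * m) • a = a) (hl : g ^ (2 * l) • a = a)
    (hm' : g ^ m • a ≠ a) (hl' : g ^ l • a ≠ a) : g ^ m • a = g ^ l • a := by
  rw [zpow_smul_eq_iff_period_dvd] at hm hl
  rw [Ne, zpow_smul_eq_iff_period_dvd] at hm' hl'
  obtain ⟨c, hc⟩ := hm
  obtain ⟨c', hc'⟩ := hl
  obtain ⟨k, rfl⟩ : Odd c :=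
    Int.not_even_iff_odd.mp fun ⟨k, hk⟩ => hm' ⟨k, by subst hk; linarith⟩
  obtain ⟨k', rfl⟩ : Odd c' :=
    Int.not_even_iff_odd.mp fun ⟨k, hk⟩ => hl' ⟨k, by subst hk; linarith⟩
  have hdvd : g ^ (m - l) • a = a := zpow_smul_eq_iff_period_dvd.mpr ⟨k - k', by linarith⟩
  calc g ^ m • a = g ^ l • g ^ (m - l) • a := by rw [smul_smul, ← zpow_add, add_sub_cancel]
    _ = g ^ l • a := by rw [hdvd]

theorem Function.Involutive.eq_of_isFixedPt_of_reflTransGen {α : Type*} {f g : α → α}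
    (hf : Involutive f) (hg : Involutive g) {x a b : α} (hx : IsFixedPt f x)
    (ha : IsFixedPt f a) (hb : IsFixedPt f b) (hax : a ≠ x) (hbx : b ≠ x)
    (hxa : ReflTransGen (fun s t => t = f s ∨ t = g s) x a)
    (hxb : ReflTransGen (fun s t => t = f s ∨ t = g s) x b) : a = b := by
  set F := hf.toPerm f
  set r := hg.toPerm g * F
  -- `f` reverses the orbit of its fixed point `x` under the rotation `r = g ∘ f`
  have hconj : ∀ m : ℤ, F • r ^ m • x = r ^ (-m) • x := by
    have : SemiconjBy F r r⁻¹ := by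
      ext y; simp [r, F, Equiv.Perm.inv_def, Involutive.toPerm_symm]
    intro m
    rw [smul_smul, (this.zpow_right m).eq, mul_smul, inv_zpow']
    exact congrArg _ hx
  have horbit : ∀ t, ReflTransGen (fun s t => t = f s ∨ t = g s) x t →
      ∃ m : ℤ, r ^ m • x = t := by
    intro t ht
    induction ht with
    | refl => exact ⟨0, by simp⟩
    | tail _ hst ih =>
      obtain ⟨m, rfl⟩ := ih
      rcases hst with rfl | rfl
      · exact ⟨-m, (hconj m).symm⟩
      · refine ⟨1 - m, ?_⟩
        rw [sub_eq_add_neg, zpow_add, zpow_one, mul_smul, ← hconj]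
        simp [r, F, Equiv.Perm.smul_def, hf _]
  have hfixed : ∀ m : ℤ, IsFixedPt f (r ^ m • x) → r ^ (2 * m) • x = x := by
    intro m hm
    have h := congrArg (r ^ m • ·) ((hconj m).symm.trans hm)
    simp only [smul_smul, ← zpow_add, add_neg_cancel, zpow_zero, one_smul] at h
    rwa [two_mul, eq_comm]
  obtain ⟨m, rfl⟩ := horbit a hxa
  obtain ⟨l, rfl⟩ := horbit b hxb
  exact MulAction.zpow_smul_eq_of_zpow_two_mul_smul_eq (hfixed m ha) (hfixed l hb) hax hbx

namespace SimpleGraph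

variable {V : Type*} {G : SimpleGraph V}

theorem three_le_chromaticNumber_of_odd {n : ℕ} (hn : Odd n) (f : ZMod n → V)
    (hf : ∀ k, G.Adj (f k) (f (k + 1))) : 3 ≤ G.chromaticNumber := by
  have hwalk : ∀ k : ℕ, ∃ w : G.Walk (f 0) (f k), w.length = k := by
    intro k
    induction k with
    | zero => exact ⟨Walk.nil.copy rfl (by simp), by simp⟩
    | succ k ih =>
      obtain ⟨w, hw⟩ := ih
      exact ⟨w.concat (by simpa using hf k), by simp [hw]⟩
  obtain ⟨w, hw⟩ := hwalk n
  refine (w.copy rfl (by rw [ZMod.natCast_self])).three_le_chromaticNumber_of_odd_loop ?_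
  rwa [Walk.length_copy, hw]

def lineGraphColoring {α : Type*} (c : Sym2 V → α)
    (hc : ∀ ⦃x y z⦄, G.Adj x y → G.Adj x z → y ≠ z → c s(x, y) ≠ c s(x, z)) :
    G.lineGraph.Coloring α :=
  Coloring.mk (fun e => c e) <| by
    intro e₁ e₂ he
    rw [lineGraph_adj_iff_exists] at he
    obtain ⟨hne, x, hx₁, hx₂⟩ := he
    have h₁ := Sym2.other_spec hx₁
    have h₂ := Sym2.other_spec hx₂
    have hadj₁ : G.Adj x (Sym2.Mem.other hx₁) := by rw [← mem_edgeSet, h₁]; exact e₁.2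
    have hadj₂ : G.Adj x (Sym2.Mem.other hx₂) := by rw [← mem_edgeSet, h₂]; exact e₂.2
    have := hc hadj₁ hadj₂ fun h => hne (Subtype.ext (by rw [← h₁, ← h₂, h]))
    rwa [h₁, h₂] at this

section Cycle

variable {H : SimpleGraph V} {n : ℕ} {u : ZMod n → V} {x y y' : ZMod n}

theorem three_le_chromaticNumber_lineGraph (hn : Odd n) (hu : Injective u)
    (h2 : (2 : ZMod n) ≠ 0) (hcyc : ∀ k, H.Adj (u k) (u (k + 1))) :
    3 ≤ H.lineGraph.chromaticNumber := by
  refine three_le_chromaticNumber_of_odd hn (fun k => ⟨s(u k, u (k + 1)), hcyc k⟩) fun k => ?_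
  rw [lineGraph_adj_iff_exists]
  refine ⟨fun h => ?_, u (k + 1), Sym2.mem_mk_right _ _, Sym2.mem_mk_left _ _⟩
  have := congrArg Subtype.val h
  simp only [Sym2.eq_iff, hu.eq_iff] at this
  rcases this with ⟨h₁, -⟩ | ⟨h₁, -⟩
  · exact (hcyc k).ne (congrArg u h₁)
  · exact h2 (by linear_combination -h₁)

def IsChord (H : SimpleGraph V) (u : ZMod n → V) (x y : ZMod n) : Prop :=
  H.Adj (u x) (u y) ∧ y ≠ x + 1 ∧ y ≠ x - 1

theorem IsChord.symm (h : H.IsChord u x y) : H.IsChord u y x :=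
  ⟨h.1.symm, fun hx => h.2.2 (by rw [hx, add_sub_cancel_right]),
    fun hx => h.2.1 (by rw [hx, sub_add_cancel])⟩

theorem adj_eq_add_one_or_eq_sub_one_or_isChord (h : H.Adj (u x) (u y)) :
    y = x + 1 ∨ y = x - 1 ∨ H.IsChord u x y := by
  by_cases h₁ : y = x + 1
  · exact .inl h₁
  by_cases h₂ : y = x - 1
  · exact .inr (.inl h₂)
  exact .inr (.inr ⟨h, h₁, h₂⟩)

theorem isChord_neg_iff : H.IsChord (fun j => u (-j)) x y ↔ H.IsChord u (-x) (-y) := by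
  have e₁ : -y = -x + 1 ↔ y = x - 1 :=
    ⟨fun h => by linear_combination -h, fun h => by rw [h]; ring⟩
  have e₂ : -y = -x - 1 ↔ y = x + 1 :=
    ⟨fun h => by linear_combination -h, fun h => by rw [h]; ring⟩
  simp only [IsChord, ne_eq, e₁, e₂]
  tauto

theorem IsChord.card_eq_three [DecidableEq V] (hu : Injective u) (h2 : (2 : ZMod n) ≠ 0)
    (h : H.IsChord u x y) : ({u (x + 1), u (x - 1), u y} : Finset V).card = 3 := by
  refine Finset.card_eq_three.mpr ⟨_, _, _, hu.ne ?_, hu.ne ?_, hu.ne ?_, rfl⟩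
  · exact fun he => h2 (by linear_combination he)
  · exact fun he => h.2.1 he.symm
  · exact fun he => h.2.2 he.symm

variable [Fintype V] [DecidableRel H.Adj]

theorem IsChord.subset_neighborFinset [DecidableEq V] (hcyc : ∀ k, H.Adj (u k) (u (k + 1)))
    (h : H.IsChord u x y) : {u (x + 1), u (x - 1), u y} ⊆ H.neighborFinset (u x) := by
  intro w hw
  simp only [Finset.mem_insert, Finset.mem_singleton] at hw
  rcases hw with rfl | rfl | rfl
  · simpa using hcyc x
  · simpa using (hcyc (x - 1)).symm
  · simpa using h.1

theorem IsChord.three_le_degree (hu : Injective u) (h2 : (2 : ZMod n) ≠ 0)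
    (hcyc : ∀ k, H.Adj (u k) (u (k + 1))) (h : H.IsChord u x y) : 3 ≤ H.degree (u x) := by
  classical
  rw [← card_neighborFinset_eq_degree, ← h.card_eq_three hu h2]
  exact Finset.card_le_card (h.subset_neighborFinset hcyc)

theorem IsChord.eq (hu : Injective u) (h2 : (2 : ZMod n) ≠ 0)
    (hcyc : ∀ k, H.Adj (u k) (u (k + 1))) (hmax : H.degree (u x) ≤ 3)
    (h : H.IsChord u x y) (h' : H.IsChord u x y') : y' = y := by
  classical
  have hnbr := Finset.eq_of_subset_of_card_le (h.subset_neighborFinset hcyc)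
    (by rwa [h.card_eq_three hu h2, card_neighborFinset_eq_degree])
  have hy' : u y' ∈ H.neighborFinset (u x) := by simpa using h'.1
  rw [← hnbr] at hy'
  simp only [Finset.mem_insert, Finset.mem_singleton, hu.eq_iff] at hy'
  exact hy'.resolve_left h'.2.1 |>.resolve_left h'.2.2

open Classical in
noncomputable def chordPartner (H : SimpleGraph V) (u : ZMod n → V) (x : ZMod n) : ZMod n :=
  if h : ∃ y, H.IsChord u x y then h.choose else x

theorem chordPartner_eq (hu : Injective u) (h2 : (2 : ZMod n) ≠ 0)
    (hcyc : ∀ k, H.Adj (u k) (u (k + 1))) (hmax : ∀ w, H.degree w ≤ 3) (h : H.IsChord u x y) :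
    H.chordPartner u x = y := by
  have hex : ∃ y, H.IsChord u x y := ⟨y, h⟩
  rw [chordPartner, dif_pos hex]
  exact h.eq hu h2 hcyc (hmax _) hex.choose_spec

theorem chordPartner_involutive (hu : Injective u) (h2 : (2 : ZMod n) ≠ 0)
    (hcyc : ∀ k, H.Adj (u k) (u (k + 1))) (hmax : ∀ w, H.degree w ≤ 3) :
    Involutive (H.chordPartner u) := by
  intro x
  by_cases hex : ∃ y, H.IsChord u x y
  · obtain ⟨y, hy⟩ := hex
    rw [chordPartner_eq hu h2 hcyc hmax hy, chordPartner_eq hu h2 hcyc hmax hy.symm]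
  · have hx : H.chordPartner u x = x := dif_neg hex
    rw [hx, hx]

end Cycle

end SimpleGraph

namespace SubcubicHamiltonian

variable {p : ℕ}

def pairNat (p k : ℕ) : ℕ :=
  if 3 ≤ k ∧ k + 2 ≤ 2 * p then (if k % 2 = 1 then k + 1 else k - 1) else k

theorem pairNat_le {k : ℕ} (hk : k ≤ 2 * p) : pairNat p k ≤ 2 * p := by
  unfold pairNat; split_ifs <;> omega

theorem pairNat_pairNat (k : ℕ) : pairNat p (pairNat p k) = k := by
  unfold pairNat; split_ifs <;> omega

theorem pairNat_sub {k : ℕ} (hk : k ≤ 2 * p + 1) :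
    pairNat p (2 * p + 1 - k) = 2 * p + 1 - pairNat p k := by
  unfold pairNat; split_ifs <;> omega

def pairing (p : ℕ) (x : ZMod (2 * p + 1)) : ZMod (2 * p + 1) := pairNat p x.val

theorem val_pairing (x : ZMod (2 * p + 1)) : (pairing p x).val = pairNat p x.val :=
  ZMod.val_cast_of_lt (Nat.lt_succ_of_le (pairNat_le (Nat.le_of_lt_succ x.val_lt)))

theorem pairing_eq_of_val {x y : ZMod (2 * p + 1)} (h : pairNat p x.val = y.val) :
    pairing p x = y := by
  rw [pairing, h, ZMod.natCast_zmod_val]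

theorem pairing_involutive : Function.Involutive (pairing p) := fun x =>
  pairing_eq_of_val (by rw [val_pairing, pairNat_pairNat])

theorem pairing_neg (x : ZMod (2 * p + 1)) : pairing p (-x) = -pairing p x := by
  obtain rfl | hx := eq_or_ne x 0
  · simp [pairing, pairNat]
  have hle := pairNat_le (p := p) (Nat.le_of_lt_succ x.val_lt)
  rw [pairing, pairing, ZMod.neg_val, if_neg hx, pairNat_sub x.val_lt.le,
    Nat.cast_sub (by omega), ZMod.natCast_self, zero_sub]

theorem val_add_one (hp : 1 ≤ p) (x : ZMod (2 * p + 1)) :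
    (x + 1).val = if x.val = 2 * p then 0 else x.val + 1 := by
  have := x.val_lt
  rw [ZMod.val_add, ZMod.val_one'' (by omega)]
  split_ifs with h
  · rw [h, Nat.mod_self]
  · exact Nat.mod_eq_of_lt (by omega)

theorem val_two (hp : 1 ≤ p) : (2 : ZMod (2 * p + 1)).val = 2 := by
  rw [ZMod.val_two_eq_two_mod, Nat.mod_eq_of_lt (by omega)]

theorem two_ne_zero_of_one_le (hp : 1 ≤ p) : (2 : ZMod (2 * p + 1)) ≠ 0 := fun h => by
  simpa [h] using val_two hp

theorem val_neg_two (hp : 1 ≤ p) : (-2 : ZMod (2 * p + 1)).val = 2 * p - 1 := by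
  rw [ZMod.neg_val, if_neg (two_ne_zero_of_one_le hp), val_two hp]
  omega

open Classical in
noncomputable def cycleColour (S : Set (ZMod (2 * p + 1))) (x : ZMod (2 * p + 1)) : Fin 3 :=
  if x.val = 0 then 0 else if x.val = 1 then 1 else if x.val % 2 = 0 then 2
  else if x ∈ S then 0 else 1

open Classical in
noncomputable def chordColour (S : Set (ZMod (2 * p + 1))) (x : ZMod (2 * p + 1)) : Fin 3 :=
  if x ∈ S then 1 else 0

theorem cycleColour_ne_add_one (hp : 1 ≤ p) (S : Set (ZMod (2 * p + 1)))
    (x : ZMod (2 * p + 1)) : cycleColour S x ≠ cycleColour S (x + 1) := by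
  have := x.val_lt
  unfold cycleColour
  rw [val_add_one hp]
  split_ifs <;> first | decide | contradiction | omega

section cycleColour

variable {S : Set (ZMod (2 * p + 1))} {x : ZMod (2 * p + 1)}

theorem cycleColour_of_val_eq_zero (h : x.val = 0) : cycleColour S x = 0 := by
  simp [cycleColour, h]

theorem cycleColour_of_val_eq_one (h : x.val = 1) : cycleColour S x = 1 := by
  simp [cycleColour, h]

theorem cycleColour_of_even (h : x.val % 2 = 0) (h2 : 2 ≤ x.val) : cycleColour S x = 2 := by
  simp [cycleColour, h, show x.val ≠ 0 by omega, show x.val ≠ 1 by omega]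

open Classical in
theorem cycleColour_of_odd (h : x.val % 2 = 1) (h3 : 3 ≤ x.val) :
    cycleColour S x = if x ∈ S then 0 else 1 := by
  simp [cycleColour, h, show x.val ≠ 0 by omega, show x.val ≠ 1 by omega]

end cycleColour

theorem chordColour_ne (hp : 1 ≤ p) {S : Set (ZMod (2 * p + 1))} (h0 : 0 ∈ S) (h2 : 2 ∉ S)
    (hpair : ∀ x, pairing p x ∈ S ↔ x ∈ S) {z : ZMod (2 * p + 1)} (hz1 : z ≠ 1)
    (hz2 : z ≠ -1) :
    chordColour S z ≠ cycleColour S z ∧ chordColour S z ≠ cycleColour S (z - 1) := by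
  obtain ⟨w, rfl⟩ : ∃ w, z = w + 1 := ⟨z - 1, by ring⟩
  rw [add_sub_cancel_right]
  have hw := w.val_lt
  have hval := val_add_one hp w
  by_cases htop : w.val = 2 * p
  · rw [if_pos htop] at hval
    rw [(ZMod.val_eq_zero _).mp hval, cycleColour_of_val_eq_zero (ZMod.val_zero),
      cycleColour_of_even (by omega) (by omega)]
    simp [chordColour, h0]
  rw [if_neg htop] at hval
  have hv1 : w.val ≠ 0 := fun h =>
    hz1 (ZMod.val_injective _ (by rw [hval, h, ZMod.val_one'' (by omega)]))
  have hv2 : w.val ≠ 2 * p - 1 := fun h =>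
    hz2 (ZMod.val_injective _ (by rw [hval, h, ZMod.val_neg_one]; omega))
  rcases (by omega : w.val = 1 ∨ w.val % 2 = 0 ∧ 2 ≤ w.val ∨
      w.val % 2 = 1 ∧ 3 ≤ w.val ∧ w.val + 3 ≤ 2 * p) with
    h1 | ⟨he, h2'⟩ | ⟨ho, h3, h3'⟩
  · have hz : w + 1 = 2 := ZMod.val_injective _ (by rw [hval, h1, val_two hp])
    rw [cycleColour_of_val_eq_one h1, hz,
      cycleColour_of_even (by rw [val_two hp]) (by rw [val_two hp])]
    simp [chordColour, h2]
  · rw [cycleColour_of_even he h2', cycleColour_of_odd (by omega) (by omega)]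
    by_cases hS : w + 1 ∈ S <;> simp [chordColour, hS]
  · have hmem : w ∈ S ↔ w + 1 ∈ S := by
      rw [← hpair w, pairing_eq_of_val (y := w + 1)]
      rw [hval, pairNat, if_pos ⟨h3, by omega⟩, if_pos ho]
    rw [cycleColour_of_even (by omega) (by omega), cycleColour_of_odd ho h3, hmem]
    by_cases hS : w + 1 ∈ S <;> simp [chordColour, hS]

open Classical in
noncomputable def edgeColour (S : Set (ZMod (2 * p + 1))) (x y : ZMod (2 * p + 1)) : Fin 3 :=
  if y = x + 1 then cycleColour S x
  else if x = y + 1 then cycleColour S y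
  else if x ∈ S ∨ y ∈ S then 1 else 0

section edgeColour

variable {S : Set (ZMod (2 * p + 1))}

theorem edgeColour_comm (hp : 1 ≤ p) (x y : ZMod (2 * p + 1)) :
    edgeColour S x y = edgeColour S y x := by
  unfold edgeColour
  by_cases hxy : y = x + 1
  · have hyx : x ≠ y + 1 := fun h =>
      two_ne_zero_of_one_le hp (by linear_combination -h - hxy)
    rw [if_pos hxy, if_neg hyx, if_pos hxy]
  · by_cases hyx : x = y + 1
    · rw [if_neg hxy, if_pos hyx, if_pos hyx]
    · rw [if_neg hxy, if_neg hyx, if_neg hyx, if_neg hxy]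
      congr 1
      exact propext or_comm

theorem edgeColour_add_one (x : ZMod (2 * p + 1)) : edgeColour S x (x + 1) = cycleColour S x :=
  if_pos rfl

theorem edgeColour_sub_one (hp : 1 ≤ p) (x : ZMod (2 * p + 1)) :
    edgeColour S x (x - 1) = cycleColour S (x - 1) := by
  have hne : x - 1 ≠ x + 1 := fun h => two_ne_zero_of_one_le hp (by linear_combination -h)
  rw [edgeColour, if_neg hne, if_pos (sub_add_cancel x 1).symm]

end edgeColour

variable {V : Type*} {H : SimpleGraph V} {u : ZMod (2 * p + 1) → V}

structure IsAdmissible (H : SimpleGraph V) (u : ZMod (2 * p + 1) → V)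
    (S : Set (ZMod (2 * p + 1))) : Prop where
  zero_mem : 0 ∈ S
  pairing_mem_iff : ∀ x, pairing p x ∈ S ↔ x ∈ S
  mem_iff_of_isChord : ∀ ⦃x y⦄, H.IsChord u x y → (x ∈ S ↔ y ∈ S)

theorem IsAdmissible.neg {S : Set (ZMod (2 * p + 1))} (hS : IsAdmissible H u S) :
    IsAdmissible H (fun j => u (-j)) (-S) where
  zero_mem := by simpa using hS.zero_mem
  pairing_mem_iff x := by simpa [Set.mem_neg, pairing_neg] using hS.pairing_mem_iff (-x)
  mem_iff_of_isChord x y h := hS.mem_iff_of_isChord (SimpleGraph.isChord_neg_iff.mp h)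

def reachSet (H : SimpleGraph V) (u : ZMod (2 * p + 1) → V) : Set (ZMod (2 * p + 1)) :=
  {x | ReflTransGen (fun s t => t = pairing p s ∨ H.IsChord u s t) 0 x}

theorem isAdmissible_reachSet : IsAdmissible H u (reachSet H u) where
  zero_mem := .refl
  pairing_mem_iff x :=
    ⟨fun h => h.tail (.inl (pairing_involutive x).symm), fun h => h.tail (.inl rfl)⟩
  mem_iff_of_isChord _ _ h := ⟨fun hx => hx.tail (.inr h), fun hy => hy.tail (.inr h.symm)⟩

variable [Fintype V] [DecidableRel H.Adj]

theorem edgeColour_ne (hp : 1 ≤ p) (hmax : ∀ w, H.degree w ≤ 3) (hu : Injective u)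
    (hcyc : ∀ k, H.Adj (u k) (u (k + 1))) (h1 : H.degree (u 1) = 2)
    (h1' : H.degree (u (-1)) = 2) {S : Set (ZMod (2 * p + 1))} (hS : IsAdmissible H u S)
    (h2 : 2 ∉ S) {z y₁ y₂ : ZMod (2 * p + 1)} (hy₁ : H.Adj (u z) (u y₁))
    (hy₂ : H.Adj (u z) (u y₂)) (hne : y₁ ≠ y₂) :
    edgeColour S z y₁ ≠ edgeColour S z y₂ := by
  have htwo := two_ne_zero_of_one_le hp
  have hcycle : edgeColour S z (z + 1) ≠ edgeColour S z (z - 1) := by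
    rw [edgeColour_add_one, edgeColour_sub_one hp]
    simpa using (cycleColour_ne_add_one hp S (z - 1)).symm
  have hchord : ∀ {y}, H.IsChord u z y →
      edgeColour S z y ≠ edgeColour S z (z + 1) ∧
        edgeColour S z y ≠ edgeColour S z (z - 1) := by
    intro y hy
    have hz1 : z ≠ 1 := by rintro rfl; have := hy.three_le_degree hu htwo hcyc; omega
    have hz2 : z ≠ -1 := by rintro rfl; have := hy.three_le_degree hu htwo hcyc; omega
    have hcol : edgeColour S z y = chordColour S z := by
      have hzy : ¬(z ∈ S ∨ y ∈ S) ↔ z ∉ S := by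
        rw [← hS.mem_iff_of_isChord hy, or_self]
      unfold edgeColour chordColour
      rw [if_neg hy.2.1, if_neg fun h => hy.2.2 (by rw [h, add_sub_cancel_right])]
      by_cases hz : z ∈ S
      · rw [if_pos (.inl hz), if_pos hz]
      · rw [if_neg (hzy.mpr hz), if_neg hz]
    rw [hcol, edgeColour_add_one, edgeColour_sub_one hp]
    exact chordColour_ne hp hS.zero_mem h2 hS.pairing_mem_iff hz1 hz2
  rcases SimpleGraph.adj_eq_add_one_or_eq_sub_one_or_isChord hy₁ with rfl | rfl | hc₁ <;>
    rcases SimpleGraph.adj_eq_add_one_or_eq_sub_one_or_isChord hy₂ with rfl | rfl | hc₂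
  · exact absurd rfl hne
  · exact hcycle
  · exact (hchord hc₂).1.symm
  · exact hcycle.symm
  · exact absurd rfl hne
  · exact (hchord hc₂).2.symm
  · exact (hchord hc₁).1
  · exact (hchord hc₁).2
  · exact absurd (hc₂.eq hu htwo hcyc (hmax _) hc₁) hne

theorem lineGraph_colorable_of_isAdmissible (hp : 1 ≤ p) (hmax : ∀ w, H.degree w ≤ 3)
    (hu : Bijective u) (hcyc : ∀ k, H.Adj (u k) (u (k + 1))) (h1 : H.degree (u 1) = 2)
    (h1' : H.degree (u (-1)) = 2) {S : Set (ZMod (2 * p + 1))} (hS : IsAdmissible H u S)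
    (h2 : 2 ∉ S) : H.lineGraph.Colorable 3 := by
  let E := Equiv.ofBijective u hu
  let c : Sym2 V → Fin 3 :=
    Sym2.lift ⟨fun a b => edgeColour S (E.symm a) (E.symm b),
      fun _ _ => edgeColour_comm hp _ _⟩
  refine ⟨SimpleGraph.lineGraphColoring c ?_⟩
  intro a b₁ b₂ hb₁ hb₂ hne
  obtain ⟨z, rfl⟩ := hu.surjective a
  obtain ⟨y₁, rfl⟩ := hu.surjective b₁
  obtain ⟨y₂, rfl⟩ := hu.surjective b₂
  simp only [c, E, Sym2.lift_mk, Equiv.ofBijective_symm_apply_apply]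
  exact edgeColour_ne hp hmax hu.injective hcyc h1 h1' hS h2 hb₁ hb₂ (hne <| congrArg u ·)

theorem two_notMem_or_neg_two_notMem_reachSet (hp : 1 ≤ p) (hmax : ∀ w, H.degree w ≤ 3)
    (hu : Injective u) (hcyc : ∀ k, H.Adj (u k) (u (k + 1))) :
    2 ∉ reachSet H u ∨ -2 ∉ reachSet H u := by
  rw [← not_and_or]
  rintro ⟨h2, hm2⟩
  have htwo := two_ne_zero_of_one_le hp
  have hreach : ∀ x ∈ reachSet H u,
      ReflTransGen (fun s t => t = pairing p s ∨ t = H.chordPartner u s) 0 x :=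
    fun x hx => ReflTransGen.mono (fun s t hst =>
      hst.imp_right fun h => (SimpleGraph.chordPartner_eq hu htwo hcyc hmax h).symm) _ _ hx
  have hfix2 : pairing p 2 = 2 := pairing_eq_of_val (by simp [val_two hp, pairNat])
  have h := pairing_involutive.eq_of_isFixedPt_of_reflTransGen
    (SimpleGraph.chordPartner_involutive hu htwo hcyc hmax)
    (pairing_eq_of_val (by simp [pairNat])) hfix2 (by rw [IsFixedPt, pairing_neg, hfix2])
    htwo (neg_ne_zero.mpr htwo) (hreach _ h2) (hreach _ hm2)
  have := congrArg ZMod.val h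
  rw [val_two hp, val_neg_two hp] at this
  omega

theorem lineGraph_colorable_three (hp : 1 ≤ p) (hmax : ∀ w, H.degree w ≤ 3)
    (hu : Bijective u) (hcyc : ∀ k, H.Adj (u k) (u (k + 1))) (h1 : H.degree (u 1) = 2)
    (h1' : H.degree (u (-1)) = 2) : H.lineGraph.Colorable 3 := by
  rcases two_notMem_or_neg_two_notMem_reachSet hp hmax hu.injective hcyc with h2 | h2
  · exact lineGraph_colorable_of_isAdmissible hp hmax hu hcyc h1 h1' isAdmissible_reachSet
      h2
  · refine lineGraph_colorable_of_isAdmissible (u := fun j => u (-j)) hp hmax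
      (hu.comp (Equiv.neg _).bijective) (fun k => ?_) (by simpa using h1') (by rwa [neg_neg])
      isAdmissible_reachSet.neg (by simpa using h2)
    simpa [add_comm] using (hcyc (-(k + 1))).symm

end SubcubicHamiltonian

open SubcubicHamiltonian in
theorem stmt11_general {V : Type*} [Fintype V] (H : SimpleGraph V)
    [DecidableRel H.Adj] (p : ℕ) (hp : 1 ≤ p)
    (hmax : ∀ w, H.degree w ≤ 3)
    (v : ZMod (2 * p + 1) → V) (hbij : Function.Bijective v)
    (hcyc : ∀ i, H.Adj (v i) (v (i + 1)))
    (i : ZMod (2 * p + 1))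
    (h1 : H.degree (v (i - 1)) = 2) (h2 : H.degree (v (i + 1)) = 2) :
    H.chromaticIndex = 3 := by
  set u : ZMod (2 * p + 1) → V := fun j => v (i + j)
  have hu : Bijective u := hbij.comp (Equiv.addLeft i).bijective
  have hcycu : ∀ j, H.Adj (u j) (u (j + 1)) := fun j => by
    simpa [u, add_assoc] using hcyc (i + j)
  refine le_antisymm ?_ ?_
  · have := lineGraph_colorable_three hp hmax hu hcycu h2 (by rwa [sub_eq_add_neg] at h1)
    exact_mod_cast this.chromaticNumber_le
  · exact SimpleGraph.three_le_chromaticNumber_lineGraph (odd_two_mul_add_one p) hbij.injective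
      (two_ne_zero_of_one_le hp) hcyc

/-- Lemma 1, case 3: a connected Hamiltonian subcubic graph on an odd number `2p+1` of
vertices, with an index `i` such that both cycle-neighbors `v_{i-1}`, `v_{i+1}` have
degree 2, has chromatic index 3. -/
theorem stmt11 {V : Type*} [Fintype V] [DecidableEq V] (H : SimpleGraph V)
    [DecidableRel H.Adj] (p : ℕ) (hp : 1 ≤ p)
    (hconn : H.Connected) (hmax : ∀ w, H.degree w ≤ 3)
    (v : ZMod (2 * p + 1) → V) (hbij : Function.Bijective v)
    (hcyc : ∀ i, H.Adj (v i) (v (i + 1)))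
    (i : ZMod (2 * p + 1))
    (h1 : H.degree (v (i - 1)) = 2) (h2 : H.degree (v (i + 1)) = 2) :
    H.chromaticIndex = 3 :=
  stmt11_general H p hp hmax v hbij hcyc i h1 h2
end

section
/- Let Q = v1…v_p be a shortest induced odd cycle (p ≥ 5 odd) in a triangle-free graph H, and let w be a vertex not on Q adjacent to at least two vertices of Q. Then the two neighbors of w on Q are at distance exactly 2 along the cycle; i.e., if w is adjacent to v_i and v_j with i ≠ j, then j ≡ i ± 2 (mod p). -/
/-!
Write `d` for the distance from `i` to `j` along the cycle. If `d` is neither `2` nor `p - 2`,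
then one of the two arcs of `Q` joining `v i` and `v j` has odd length `e ≤ p - 3`, because `p`
is odd. Between two consecutive neighbours of `w` on that arc there is a sub-arc of odd length
`g`, and together with `w` it closes an induced odd cycle of length `g + 2 < p` (a triangle when
`g = 1`), contradicting the minimality of `p`.
-/

open Set

theorem ZMod.eq_add_one_iff_val {q : ℕ} [NeZero q] {m n : ZMod q} :
    n = m + 1 ↔ n.val = m.val + 1 ∨ (m.val + 1 = q ∧ n.val = 0) := by
  rw [← (ZMod.val_injective q).eq_iff, ZMod.val_add, ZMod.val_one_eq_one_mod, Nat.add_mod_mod]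
  have hm := m.val_lt
  have hn := n.val_lt
  rcases (show m.val + 1 < q ∨ m.val + 1 = q by omega) with h | h
  · rw [Nat.mod_eq_of_lt h]
    omega
  · rw [h, Nat.mod_self]
    omega

theorem Nat.exists_odd_gap {P : ℕ → Prop} {e : ℕ} (h0 : P 0) (he : P e) (hodd : Odd e) :
    ∃ k g, k + g ≤ e ∧ Odd g ∧ P k ∧ P (k + g) ∧ ∀ m, 0 < m → m < g → ¬ P (k + m) := by
  classical
  induction e using Nat.strong_induction_on generalizing P with
  | _ e ih =>
  have hex : ∃ m, 0 < m ∧ P m := ⟨e, hodd.pos, he⟩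
  obtain ⟨hfind_pos, hfind⟩ := Nat.find_spec hex
  have hge : Nat.find hex ≤ e := Nat.find_min' hex ⟨hodd.pos, he⟩
  -- either the first gap is odd, or it is even and the rest of `[0, e]` has odd length
  rcases Nat.even_or_odd (Nat.find hex) with hev | hodd'
  · obtain ⟨k, g, hkg, hg, hk, hkg', hgap⟩ :=
      ih (e - Nat.find hex) (by obtain ⟨r, hr⟩ := hev; omega) (P := fun m => P (Nat.find hex + m))
        (by simpa) (by rwa [Nat.add_sub_cancel' hge]) (Nat.Odd.sub_even hge hodd hev)
    refine ⟨Nat.find hex + k, g, by omega, hg, hk, by rwa [add_assoc], fun m hm hmg => ?_⟩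
    rw [add_assoc]
    exact hgap m hm hmg
  · exact ⟨0, Nat.find hex, by omega, hodd', h0, by simpa, fun m hm hmg hP =>
      Nat.find_min hex hmg ⟨hm, by simpa using hP⟩⟩

namespace SimpleGraph

variable {V : Type*} {H : SimpleGraph V}

def IsInducedCycle (H : SimpleGraph V) {q : ℕ} (u : ZMod q → V) : Prop :=
  Function.Injective u ∧ ∀ i j : ZMod q, H.Adj (u i) (u j) ↔ (j = i + 1 ∨ i = j + 1)

def IsInducedPath (H : SimpleGraph V) (x : ℕ → V) (e : ℕ) : Prop :=
  InjOn x (Iic e) ∧ ∀ s ≤ e, ∀ t ≤ e, H.Adj (x s) (x t) ↔ (t = s + 1 ∨ s = t + 1)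

theorem isInducedCycle_comp_val {q : ℕ} [NeZero q] {y : ℕ → V} (hinj : InjOn y (Iio q))
    (hadj : ∀ s < q, ∀ t < q, H.Adj (y s) (y t) ↔
      (t = s + 1 ∨ s = t + 1 ∨ (s = 0 ∧ t + 1 = q) ∨ (t = 0 ∧ s + 1 = q))) :
    IsInducedCycle H (fun m : ZMod q => y m.val) := by
  refine ⟨fun m n h => ZMod.val_injective q (hinj m.val_lt n.val_lt h), fun m n => ?_⟩
  have hm := m.val_lt
  have hn := n.val_lt
  rw [hadj _ hm _ hn, ZMod.eq_add_one_iff_val, ZMod.eq_add_one_iff_val]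
  omega

theorem IsInducedCycle.isInducedPath_arc {p : ℕ} {v : ZMod p → V} (hv : IsInducedCycle H v)
    (a : ZMod p) {e : ℕ} (he : e + 2 ≤ p) : IsInducedPath H (fun s => v (a + s)) e := by
  have cast_inj : ∀ s t, s < p → t < p → ((s : ZMod p) = t ↔ s = t) := fun s t hs ht => by
    rw [ZMod.natCast_eq_natCast_iff', Nat.mod_eq_of_lt hs, Nat.mod_eq_of_lt ht]
  refine ⟨fun s hs t ht hst => ?_, fun s hs t ht => ?_⟩
  · rw [mem_Iic] at hs ht
    exact (cast_inj s t (by omega) (by omega)).1 (add_left_cancel (hv.1 hst))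
  · rw [hv.2, add_assoc, add_assoc, add_right_inj, add_right_inj, ← Nat.cast_succ,
      ← Nat.cast_succ, cast_inj _ _ (by omega) (by omega), cast_inj _ _ (by omega) (by omega)]

theorem IsInducedPath.shift {x : ℕ → V} {e : ℕ} (hx : IsInducedPath H x e) {k l : ℕ}
    (hkl : k + l ≤ e) : IsInducedPath H (fun s => x (k + s)) l := by
  refine ⟨fun s hs t ht hst => ?_, fun s hs t ht => ?_⟩
  · rw [mem_Iic] at hs ht
    have := hx.1 (mem_Iic.2 (by omega)) (mem_Iic.2 (by omega)) hst
    omega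
  · rw [hx.2 _ (by omega) _ (by omega)]
    omega

theorem IsInducedPath.exists_isInducedCycle {x : ℕ → V} {e : ℕ} (hx : IsInducedPath H x e)
    {w : V} (hw : ∀ s ≤ e, w ≠ x s) (h0 : H.Adj w (x 0)) (he : H.Adj w (x e))
    (hgap : ∀ m, 0 < m → m < e → ¬ H.Adj w (x m)) : ∃ u : ZMod (e + 2) → V, IsInducedCycle H u := by
  have hwx : ∀ s ≤ e, H.Adj w (x s) ↔ (s = 0 ∨ s = e) := fun s hs =>
    ⟨fun h => by by_contra hne; exact hgap s (by omega) (by omega) h,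
      by rintro (rfl | rfl) <;> assumption⟩
  refine ⟨_, isInducedCycle_comp_val (y := fun s => if s = 0 then w else x (s - 1)) ?_ ?_⟩
  · intro s hs t ht hst
    rw [mem_Iio] at hs ht
    dsimp only at hst
    split_ifs at hst with hs0 ht0
    · omega
    · exact absurd hst (hw _ (by omega))
    · exact absurd hst.symm (hw _ (by omega))
    · have := hx.1 (mem_Iic.2 (by omega)) (mem_Iic.2 (by omega)) hst
      omega
  · intro s hs t ht
    split_ifs with hs0 ht0 ht0
    · exact iff_of_false (H.irrefl) (by omega)
    · rw [hwx _ (by omega)]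
      omega
    · rw [H.adj_comm, hwx _ (by omega)]
      omega
    · rw [hx.2 _ (by omega) _ (by omega)]
      omega

theorem IsInducedCycle.not_adj_of_odd_arc {p : ℕ} {v : ZMod p → V} (hv : IsInducedCycle H v)
    (hmin : ∀ q : ℕ, Odd q → 3 ≤ q → (∃ u : ZMod q → V, IsInducedCycle H u) → p ≤ q)
    {w : V} (hw : ∀ i, w ≠ v i) (a : ZMod p) {e : ℕ} (he : Odd e) (hep : e + 3 ≤ p)
    (h0 : H.Adj w (v a)) : ¬ H.Adj w (v (a + e)) := fun hae => by
  obtain ⟨k, g, hkg, hg, hk, hkg', hgap⟩ :=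
    Nat.exists_odd_gap (P := fun m => H.Adj w (v (a + m))) (by simpa using h0) hae he
  have hpath := (hv.isInducedPath_arc a (e := e) (by omega)).shift hkg
  have := hmin (g + 2) (hg.add_even even_two) (by obtain ⟨r, hr⟩ := hg; omega)
    (hpath.exists_isInducedCycle (fun _ _ => hw _) hk hkg' hgap)
  omega

end SimpleGraph

theorem stmt16_general {V : Type*} (H : SimpleGraph V)
    (p : ℕ) (hodd : Odd p)
    (v : ZMod p → V) (hinj : Function.Injective v)
    (hind : ∀ i j : ZMod p, H.Adj (v i) (v j) ↔ (j = i + 1 ∨ i = j + 1))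
    (hmin : ∀ q : ℕ, Odd q → 3 ≤ q →
      (∃ u : ZMod q → V, Function.Injective u ∧
        ∀ i j : ZMod q, H.Adj (u i) (u j) ↔ (j = i + 1 ∨ i = j + 1)) → p ≤ q)
    (w : V) (hw : ∀ i, w ≠ v i)
    (i j : ZMod p) (hwi : H.Adj w (v i)) (hwj : H.Adj w (v j)) (hij : i ≠ j) :
    j = i + 2 ∨ i = j + 2 := by
  have : NeZero p := ⟨hodd.pos.ne'⟩
  have hv : H.IsInducedCycle v := ⟨hinj, hind⟩
  obtain ⟨d, hdp, rfl⟩ : ∃ d < p, j = i + d := ⟨(j - i).val, ZMod.val_lt _, by simp⟩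
  have hd0 : d ≠ 0 := by rintro rfl; simp at hij
  by_cases hd2 : d = 2
  · left; simp [hd2]
  by_cases hdp2 : d + 2 = p
  · right
    rw [add_assoc, ← Nat.cast_ofNat, ← Nat.cast_add, hdp2, ZMod.natCast_self, add_zero]
  exfalso
  obtain ⟨r, hr⟩ := hodd
  rcases Nat.even_or_odd d with ⟨s, hs⟩ | hd
  · -- the arc from `v j` back to `v i` has odd length `p - d`
    refine hv.not_adj_of_odd_arc hmin hw (i + d) (e := p - d) ⟨r - s, by omega⟩ (by omega) hwj ?_
    rwa [add_assoc, ← Nat.cast_add, Nat.add_sub_cancel' hdp.le, ZMod.natCast_self, add_zero]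
  · exact hv.not_adj_of_odd_arc hmin hw i hd (by obtain ⟨s, hs⟩ := hd; omega) hwi hwj

/-- If `Q = v₁…v_p` is a shortest induced odd cycle (`p ≥ 5`) of a triangle-free graph
`H` and `w ∉ Q` is adjacent to two distinct vertices `v_i, v_j` of `Q`, then `v_i` and
`v_j` are at distance exactly 2 along the cycle. -/
theorem stmt16 {V : Type*} (H : SimpleGraph V) (htf : H.CliqueFree 3)
    (p : ℕ) (hp : 5 ≤ p) (hodd : Odd p)
    (v : ZMod p → V) (hinj : Function.Injective v)
    (hind : ∀ i j : ZMod p, H.Adj (v i) (v j) ↔ (j = i + 1 ∨ i = j + 1))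
    (hmin : ∀ q : ℕ, Odd q → 3 ≤ q →
      (∃ u : ZMod q → V, Function.Injective u ∧
        ∀ i j : ZMod q, H.Adj (u i) (u j) ↔ (j = i + 1 ∨ i = j + 1)) → p ≤ q)
    (w : V) (hw : ∀ i, w ≠ v i)
    (i j : ZMod p) (hwi : H.Adj w (v i)) (hwj : H.Adj w (v j)) (hij : i ≠ j) :
    j = i + 2 ∨ i = j + 2 :=
  stmt16_general H p hodd v hinj hind hmin w hw i j hwi hwj hij
end

section
/- The Petersen graph with one vertex deleted (P*) is not 3-edge-colorable: χ'(P*) = 4. -/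
/-- The Petersen graph: vertices are the 2-element subsets of a 5-element set, adjacent
iff disjoint. -/
def petersen : SimpleGraph {s : Finset (Fin 5) // s.card = 2} where
  Adj a b := a ≠ b ∧ Disjoint (a : Finset (Fin 5)) (b : Finset (Fin 5))
  symm := ⟨fun a b h => ⟨h.1.symm, h.2.symm⟩⟩
  loopless := ⟨fun a h => h.1 rfl⟩

/-!
`P*` has only twelve edges, so `χ'(P*) = 4` is a finite check on its line graph. Colourability
of a finite graph is decided by backtracking: colour the vertices one at a time, never giving
two adjacent vertices the same colour. This search succeeds exactly when a proper colouring
exists, and evaluating it finds a 4-colouring of the line graph of `P*` and exhausts its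
3-colourings.
-/

namespace SimpleGraph

variable {V : Type*} (G : SimpleGraph V)

instance [DecidableRel G.Adj] (s : Set V) : DecidableRel (G.induce s).Adj :=
  fun a b => inferInstanceAs (Decidable (G.Adj a b))

instance [Fintype V] [DecidableEq V] : DecidableRel G.lineGraph.Adj :=
  fun _ _ => decidable_of_iff' _ lineGraph_adj_iff_exists

variable [DecidableRel G.Adj] (n : ℕ)

def canExtendColoring : List V → List (V × Fin n) → Bool
  | [], _ => true
  | v :: vs, acc => (List.finRange n).any fun k =>
      acc.all (fun c => !decide (G.Adj v c.1) || c.2 != k) &&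
        canExtendColoring vs ((v, k) :: acc)

def IsProperAssignment (acc : List (V × Fin n)) : Prop :=
  ∀ a ∈ acc, ∀ b ∈ acc, G.Adj a.1 b.1 → a.2 ≠ b.2

variable {G n}

theorem canExtendColoring_of_coloring (C : G.Coloring (Fin n)) :
    ∀ (vs : List V) (acc : List (V × Fin n)), (∀ c ∈ acc, C c.1 = c.2) →
      G.canExtendColoring n vs acc = true
  | [], _, _ => rfl
  | v :: vs, acc, hacc => by
    simp only [canExtendColoring, List.any_eq_true, Bool.and_eq_true, List.all_eq_true]
    refine ⟨C v, List.mem_finRange _, fun c hc => ?_, canExtendColoring_of_coloring C vs _ ?_⟩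
    · by_cases hadj : G.Adj v c.1
      · simp [hadj, ← hacc c hc, (C.valid hadj).symm]
      · simp [hadj]
    · intro c hc
      rcases List.mem_cons.1 hc with rfl | hc
      exacts [rfl, hacc c hc]

theorem exists_isProperAssignment_of_canExtendColoring :
    ∀ (vs : List V) (acc : List (V × Fin n)), G.canExtendColoring n vs acc = true →
      G.IsProperAssignment n acc →
        ∃ acc', acc ⊆ acc' ∧ G.IsProperAssignment n acc' ∧ ∀ v ∈ vs, ∃ k, (v, k) ∈ acc'
  | [], acc, _, hacc => ⟨acc, List.Subset.refl _, hacc, by simp⟩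
  | v :: vs, acc, h, hacc => by
    simp only [canExtendColoring, List.any_eq_true, Bool.and_eq_true, List.all_eq_true] at h
    obtain ⟨k, -, hfree, hrest⟩ := h
    have hfree : ∀ c ∈ acc, G.Adj v c.1 → c.2 ≠ k := fun c hc hadj => by
      simpa [hadj] using hfree c hc
    have hproper : G.IsProperAssignment n ((v, k) :: acc) := by
      intro a ha b hb hadj
      rcases List.mem_cons.1 ha with rfl | ha <;> rcases List.mem_cons.1 hb with rfl | hb
      exacts [(hadj.ne rfl).elim, (hfree b hb hadj).symm, hfree a ha hadj.symm,
        hacc a ha b hb hadj]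
    obtain ⟨acc', hsub, hacc', hcover⟩ :=
      exists_isProperAssignment_of_canExtendColoring vs _ hrest hproper
    refine ⟨acc', fun c hc => hsub (List.mem_cons_of_mem _ hc), hacc', fun w hw => ?_⟩
    rcases List.mem_cons.1 hw with rfl | hw
    exacts [⟨k, hsub List.mem_cons_self⟩, hcover w hw]

theorem colorable_iff_canExtendColoring (vs : List V) (hvs : ∀ v, v ∈ vs) :
    G.Colorable n ↔ G.canExtendColoring n vs [] = true := by
  refine ⟨fun ⟨C⟩ => canExtendColoring_of_coloring C vs [] (by simp), fun h => ?_⟩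
  obtain ⟨acc, -, hacc, hcover⟩ :=
    exists_isProperAssignment_of_canExtendColoring vs [] h (by simp [IsProperAssignment])
  choose c hc using fun v => hcover v (hvs v)
  exact ⟨Coloring.mk c fun hadj => hacc _ (hc _) _ (hc _) hadj⟩

-- `Decidable` is a subsingleton, so the search may run on whatever list represents `univ`.
instance [Fintype V] : Decidable (G.Colorable n) :=
  Quot.recOnSubsingleton
    (motive := fun m : Multiset V => (∀ v, v ∈ m) → Decidable (G.Colorable n))
    (Finset.univ : Finset V).val
    (fun vs hvs => decidable_of_iff' _ (colorable_iff_canExtendColoring vs hvs)) Finset.mem_univ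

end SimpleGraph

instance : DecidableRel petersen.Adj := fun a b =>
  inferInstanceAs (Decidable (a ≠ b ∧ Disjoint (a : Finset (Fin 5)) (b : Finset (Fin 5))))

/-- The Petersen graph with one vertex deleted has chromatic index 4. -/
theorem stmt17 :
    ((petersen.induce
        {x | x ≠ (⟨{0, 1}, by decide⟩ : {s : Finset (Fin 5) // s.card = 2})})).chromaticIndex
      = 4 := by
  rw [SimpleGraph.chromaticIndex, show (4 : ℕ∞) = (3 : ℕ) + 1 by rfl,
    SimpleGraph.chromaticNumber_eq_iff_colorable_not_colorable]
  exact ⟨by decide, by decide⟩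
end

section
/- Let H be a connected graph such that its line graph L(H) has a cut-vertex. Then H has a cut-edge (bridge). -/
/-!
If `x` is not a bridge of the connected graph `H`, then `H - x` is still connected. A walk in
`H - x` between endpoints of two edges `e, f ≠ x` lists a sequence of edges of `H - x`, consecutive
ones sharing a vertex, so it is a walk from `e` to `f` in `L(H) - x`. Hence `L(H) - x` is connected,
and a cut-vertex `x` of `L(H)` must be a bridge of `H`.
-/

namespace SimpleGraph

variable {V : Type*} {G G' : SimpleGraph V}

lemma lineGraph_induce_reachable_of_mem_of_mem {s : Set G.edgeSet} (e f : s) {a : V}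
    (he : a ∈ (e.1 : Sym2 V)) (hf : a ∈ (f.1 : Sym2 V)) : (G.lineGraph.induce s).Reachable e f := by
  by_cases hef : e = f
  · exact hef ▸ Reachable.refl e
  · exact Adj.reachable <| lineGraph_adj_iff_exists.mpr
      ⟨fun h => hef (Subtype.ext h), a, he, hf⟩

lemma lineGraph_induce_reachable_of_walk (hle : G' ≤ G) {a b : V} (p : G'.Walk a b)
    (e f : {y : G.edgeSet | (y : Sym2 V) ∈ G'.edgeSet})
    (ha : a ∈ (e.1 : Sym2 V)) (hb : b ∈ (f.1 : Sym2 V)) :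
    (G.lineGraph.induce {y : G.edgeSet | (y : Sym2 V) ∈ G'.edgeSet}).Reachable e f := by
  induction p generalizing e with
  | nil => exact lineGraph_induce_reachable_of_mem_of_mem e f ha hb
  | @cons a c b hac q ih =>
    let g : {y : G.edgeSet | (y : Sym2 V) ∈ G'.edgeSet} := ⟨⟨s(a, c), hle hac⟩, hac⟩
    exact (lineGraph_induce_reachable_of_mem_of_mem e g ha (Sym2.mem_mk_left a c)).trans
      (ih g (Sym2.mem_mk_right a c) hb)

lemma Connected.lineGraph_induce_connected (hle : G' ≤ G) (hG' : G'.Connected)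
    (hne : G'.edgeSet.Nonempty) :
    (G.lineGraph.induce {y : G.edgeSet | (y : Sym2 V) ∈ G'.edgeSet}).Connected := by
  obtain ⟨e, he⟩ := hne
  refine (connected_iff _).mpr ⟨fun e f => ?_, ⟨⟨⟨e, edgeSet_mono hle he⟩, he⟩⟩⟩
  obtain ⟨p⟩ := hG'.preconnected e.1.1.out.1 f.1.1.out.1
  exact lineGraph_induce_reachable_of_walk hle p e f (Sym2.out_fst_mem _) (Sym2.out_fst_mem _)

end SimpleGraph

open SimpleGraph

/-- If the line graph of a connected graph `H` has a cut-vertex, then `H` has a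
cut-edge (bridge). -/
theorem stmt19 {V : Type*} (H : SimpleGraph V) (hconn : H.Connected)
    (x : H.edgeSet)
    (hcut : ¬ (H.lineGraph.induce {y | y ≠ x}).Connected) :
    ∃ e : Sym2 V, H.IsBridge e := by
  refine ⟨x, ?_⟩
  obtain ⟨e, hx⟩ := x
  cases e with | h u v =>
  by_contra hbr
  have hG' : (H.deleteEdges {s(u, v)}).Connected := hconn.connected_delete_edge_of_not_isBridge hbr
  have : Nontrivial V := ⟨u, v, (H.mem_edgeSet.mp hx).ne⟩
  obtain ⟨w, huw⟩ := hG'.preconnected.exists_adj_of_nontrivial u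
  have hset : {y : H.edgeSet | y ≠ ⟨s(u, v), hx⟩} =
      {y : H.edgeSet | (y : Sym2 V) ∈ (H.deleteEdges {s(u, v)}).edgeSet} := by
    ext y
    simp [edgeSet_deleteEdges, Subtype.ext_iff]
  exact hcut (hset ▸ hG'.lineGraph_induce_connected (deleteEdges_le _) ⟨s(u, w), huw⟩)
end
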